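/- arXiv:2512.18948 — 12 statements merged into one kernel-verified Lean document; each statement's English description precedes it below -/
import Mathlib

section
/- Every non-expansive bijection f : X → X is the identity map on X. -/
/-!
Extend `f` to a 1-Lipschitz map `F : ℝ → ℝ`. The condensation points of `X` are exactly the
complement of `V = ⋃ n, (a n, b n)`: inside `V` the set `X` is countable, while every neighbourhood
of a point outside `V` meets a gap `(b k, a (m k))`, where `X` is uncountable. Since `F` is injective
on `X` it preserves condensation points, so it maps the complement of `V` into itself; together
with surjectivity and the intermediate value theorem this gives `V ⊆ ⋃ n, F '' (a n, b n)`.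
Each image `F '' (a n, b n)` is an interval of length at most `b n - a n`, and `V` has finite
measure, so these images cover `V` up to a null set. Hence each lies in a single `[a k, b k]`, and
the halving of the lengths forces `k = n`. Thus `F` maps `[a n, b n]` onto itself, so it is the
identity or the reflection there; a reflection would send `b n` to `a n` and stretch the gap
`[b n, a (m n)]`. So `F` fixes every `a n` and `b n`, hence every point of the intervals and of
the gaps between them, and these cover `X`.
-/

open Set Topology MeasureTheory Function
open scoped ENNReal

theorem ENNReal.tsum_le_two_mul_of_two_mul_succ_le {l : ℕ → ℝ≥0∞} (h : ∀ n, 2 * l (n + 1) ≤ l n)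
    (n : ℕ) : ∑' j, l (n + j) ≤ 2 * l n := by
  have half_le : ∀ n, l (n + 1) ≤ 2⁻¹ * l n := fun n =>
    calc l (n + 1) = 2⁻¹ * (2 * l (n + 1)) := by
          rw [← mul_assoc, ENNReal.inv_mul_cancel two_ne_zero ENNReal.ofNat_ne_top, one_mul]
      _ ≤ 2⁻¹ * l n := by gcongr; exact h n
  have geometric : ∀ j, l (n + j) ≤ 2⁻¹ ^ j * l n := by
    intro j
    induction j with
    | zero => simp
    | succ j ih =>
      calc l (n + (j + 1)) ≤ 2⁻¹ * l (n + j) := half_le (n + j)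
        _ ≤ 2⁻¹ * (2⁻¹ ^ j * l n) := by gcongr
        _ = 2⁻¹ ^ (j + 1) * l n := by ring
  calc ∑' j, l (n + j) ≤ ∑' j, 2⁻¹ ^ j * l n := ENNReal.tsum_le_tsum geometric
    _ = 2 * l n := by rw [ENNReal.tsum_mul_right, ENNReal.tsum_geometric_two]

theorem lt_or_lt_of_disjoint_Icc {α : Type*} [LinearOrder α] {x y u v : α} (hxy : x ≤ y) (huv : u ≤ v)
    (h : Disjoint (Icc x y) (Icc u v)) : y < u ∨ v < x := by
  by_contra! hle
  exact h.le_bot ⟨⟨le_max_left _ _, max_le hxy hle.1⟩, ⟨le_max_right _ _, max_le hle.2 huv⟩⟩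

theorem exists_le_lt_apply_of_lt_iterate {β α : Type*} [LinearOrder α] {s : β → α} {g : β → β}
    {x : α} (j : ℕ) {k : β} (hk : s k ≤ x) (hx : x < s (g^[j] k)) :
    ∃ i, s i ≤ x ∧ x < s (g i) := by
  induction j generalizing k with
  | zero => exact absurd hk (not_le.2 hx)
  | succ j ih =>
    by_cases hgk : x < s (g k)
    · exact ⟨k, hk, hgk⟩
    · exact ih (not_lt.1 hgk) (by rwa [Function.iterate_succ_apply] at hx)

theorem exists_le_lt_apply_of_add_le {β : Type*} {s : β → ℝ} {g : β → β} {c : ℝ} (hc : 0 < c)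
    (hstep : ∀ k, s k + c ≤ s (g k)) {x : ℝ} {k : β} (hk : s k ≤ x) :
    ∃ i, s i ≤ x ∧ x < s (g i) := by
  have growth : ∀ j : ℕ, s k + j * c ≤ s (g^[j] k) := by
    intro j
    induction j with
    | zero => simp
    | succ j ih =>
      rw [Function.iterate_succ_apply']
      push_cast
      linarith [hstep (g^[j] k)]
  obtain ⟨j, hj⟩ := exists_nat_gt ((x - s k) / c)
  rw [div_lt_iff₀ hc] at hj
  exact exists_le_lt_apply_of_lt_iterate j hk (by linarith [growth j])

theorem LipschitzWith.abs_sub_le {F : ℝ → ℝ} (hF : LipschitzWith 1 F) (x y : ℝ) :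
    |F x - F y| ≤ |x - y| := by
  simpa [Real.dist_eq] using hF.dist_le_mul x y

theorem LipschitzWith.eqOn_Icc_of_apply_eq {F : ℝ → ℝ} (hF : LipschitzWith 1 F) {x y : ℝ}
    (hx : F x = x) (hy : F y = y) : EqOn F id (Icc x y) := by
  intro u hu
  have hux := hF.abs_sub_le u x
  have huy := hF.abs_sub_le u y
  rw [hx, abs_of_nonneg (sub_nonneg.2 hu.1)] at hux
  rw [hy, abs_sub_comm u y, abs_of_nonneg (sub_nonneg.2 hu.2)] at huy
  rw [abs_le] at hux huy
  simp only [id]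
  linarith [hux.2, huy.1]

theorem LipschitzWith.eqOn_Icc_id_or_reflect {F : ℝ → ℝ} (hF : LipschitzWith 1 F) {x y : ℝ}
    (hxy : x ≤ y) (h : Icc x y ⊆ F '' Icc x y) :
    EqOn F id (Icc x y) ∨ EqOn F (fun u => x + y - u) (Icc x y) := by
  obtain ⟨s, hs, hFs⟩ := h ⟨le_rfl, hxy⟩
  obtain ⟨t, ht, hFt⟩ := h ⟨hxy, le_rfl⟩
  have hst : y - x ≤ |s - t| := by
    have := hF.abs_sub_le s t
    rwa [hFs, hFt, abs_sub_comm, abs_of_nonneg (sub_nonneg.2 hxy)] at this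
  rcases le_total s t with hle | hle
  · rw [abs_sub_comm, abs_of_nonneg (sub_nonneg.2 hle)] at hst
    have hsx : s = x := by linarith [hs.1, ht.2]
    have hty : t = y := by linarith [hs.1, ht.2]
    exact Or.inl (hF.eqOn_Icc_of_apply_eq (hsx ▸ hFs) (hty ▸ hFt))
  · rw [abs_of_nonneg (sub_nonneg.2 hle)] at hst
    have hsy : s = y := by linarith [hs.2, ht.1]
    have htx : t = x := by linarith [hs.2, ht.1]
    have hG : LipschitzWith 1 (fun u => x + y - F u) := by
      simpa using (LipschitzWith.const (x + y)).sub hF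
    have hGid := hG.eqOn_Icc_of_apply_eq (x := x) (y := y) (by simp only [← htx, hFt]; ring)
      (by simp only [← hsy, hFs]; ring)
    refine Or.inr fun u hu => ?_
    have := hGid hu
    simp only [id] at this
    linarith

def condensationPoints {α : Type*} [TopologicalSpace α] (X : Set α) : Set α :=
  {x | ∀ U ∈ 𝓝 x, ¬ (U ∩ X).Countable}

theorem mapsTo_condensationPoints {α β : Type*} [TopologicalSpace α] [TopologicalSpace β]
    {F : α → β} {X : Set α} {Y : Set β} (hF : Continuous F) (hmaps : MapsTo F X Y)
    (hinj : InjOn F X) : MapsTo F (condensationPoints X) (condensationPoints Y) := by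
  intro x hx U hU hcount
  have hmaps' : MapsTo F (F ⁻¹' U ∩ X) (U ∩ Y) := fun y hy => ⟨hy.1, hmaps hy.2⟩
  exact hx (F ⁻¹' U) (hF.continuousAt hU)
    (hmaps'.countable_of_injOn (hinj.mono inter_subset_right) hcount)

theorem disjoint_condensationPoints_of_countable {α : Type*} [TopologicalSpace α] {X U : Set α}
    (hU : IsOpen U) (hcount : (U ∩ X).Countable) : Disjoint U (condensationPoints X) :=
  disjoint_left.2 fun _ hx hcp => hcp U (hU.mem_nhds hx) hcount

theorem closure_subset_condensationPoints {α : Type*} [TopologicalSpace α] {X G : Set α}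
    (hG : ∀ W, IsOpen W → (W ∩ G).Nonempty → ¬ (W ∩ X).Countable) :
    closure G ⊆ condensationPoints X := by
  intro x hx U hU hcount
  obtain ⟨W, hWU, hW, hxW⟩ := mem_nhds_iff.1 hU
  exact hG W hW (mem_closure_iff.1 hx W hW hxW) (hcount.mono (inter_subset_inter_left X hWU))

theorem measure_diff_iUnion_eq_zero {α ι : Type*} [Countable ι] [MeasurableSpace α]
    {μ : Measure α} {V J : ι → Set α} (hVm : ∀ n, MeasurableSet (V n))
    (hVd : Pairwise (Disjoint on V)) (hfin : μ (⋃ n, V n) ≠ ∞) (hJ : ∀ n, μ (J n) ≤ μ (V n))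
    (hcover : ⋃ n, V n ⊆ ⋃ n, J n) (n : ι) : μ (J n \ ⋃ n, V n) = 0 := by
  have hJV : μ (⋃ n, J n) ≤ μ (⋃ n, V n) :=
    calc μ (⋃ n, J n) ≤ ∑' n, μ (J n) := measure_iUnion_le J
      _ ≤ ∑' n, μ (V n) := ENNReal.tsum_le_tsum hJ
      _ = μ (⋃ n, V n) := (measure_iUnion hVd hVm).symm
  refine measure_mono_null (sdiff_subset_sdiff_left (subset_iUnion J n)) ?_
  rw [measure_sdiff hcover (MeasurableSet.iUnion hVm).nullMeasurableSet hfin]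
  exact tsub_eq_zero_of_le hJV

theorem volume_diff_ne_zero_of_Ioo_subset {J V : Set ℝ} {c d : ℝ} (hcd : c < d)
    (hJ : Ioo c d ⊆ J) (hV : Disjoint (Ioo c d) V) : volume (J \ V) ≠ 0 :=
  fun h => (Measure.measure_Ioo_pos volume |>.2 hcd).ne'
    (measure_mono_null (subset_sdiff.2 ⟨hJ, hV⟩) h)

theorem Set.OrdConnected.inter_nonempty_of_volume_diff_eq_zero {J V : Set ℝ} (hJ : J.OrdConnected)
    (hnull : volume (J \ V) = 0) {u v : ℝ} (hu : u ∈ J) (hv : v ∈ J) (huv : u ≠ v) :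
    (J ∩ V).Nonempty := by
  by_contra hempty
  rw [not_nonempty_iff_eq_empty, ← disjoint_iff_inter_eq_empty] at hempty
  rcases huv.lt_or_gt with h | h
  · exact volume_diff_ne_zero_of_Ioo_subset h (Ioo_subset_Icc_self.trans (hJ.out hu hv))
      (hempty.mono_left (Ioo_subset_Icc_self.trans (hJ.out hu hv))) hnull
  · exact volume_diff_ne_zero_of_Ioo_subset h (Ioo_subset_Icc_self.trans (hJ.out hv hu))
      (hempty.mono_left (Ioo_subset_Icc_self.trans (hJ.out hv hu))) hnull

theorem Set.OrdConnected.subset_Icc_of_volume_diff_eq_zero {J V : Set ℝ} (hJ : J.OrdConnected)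
    (hnull : volume (J \ V) = 0) {x y x' y' : ℝ} (hx : x' < x) (hxV : Disjoint (Ioo x' x) V)
    (hy : y < y') (hyV : Disjoint (Ioo y y') V) (hmeet : (J ∩ Ioo x y).Nonempty) :
    J ⊆ Icc x y := by
  obtain ⟨w, hwJ, hw⟩ := hmeet
  intro z hz
  constructor
  · by_contra! hzx
    refine volume_diff_ne_zero_of_Ioo_subset (max_lt hx hzx) ?_
      (hxV.mono_left (Ioo_subset_Ioo_left (le_max_left _ _))) hnull
    exact fun u hu => hJ.out hz hwJ ⟨(le_max_right _ _).trans hu.1.le, hu.2.le.trans hw.1.le⟩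
  · by_contra! hyz
    refine volume_diff_ne_zero_of_Ioo_subset (lt_min hy hyz) ?_
      (hyV.mono_left (Ioo_subset_Ioo_right (min_le_left _ _))) hnull
    exact fun u hu => hJ.out hwJ hz ⟨hw.2.le.trans hu.1.le, hu.2.le.trans (min_le_right _ _)⟩

theorem subset_image_of_mapsTo_compl {X V : Set ℝ} {F : ℝ → ℝ} (hF : Continuous F)
    (hsurj : SurjOn F X X) (hcompl : MapsTo F Vᶜ Vᶜ)
    (hV : ∀ v ∈ V, ∃ y₁ ∈ X, ∃ y₂ ∈ X, v ∈ Icc y₁ y₂) : V ⊆ F '' V := by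
  intro v hv
  obtain ⟨y₁, hy₁, y₂, hy₂, hvy⟩ := hV v hv
  obtain ⟨x₁, -, rfl⟩ := hsurj hy₁
  obtain ⟨x₂, -, rfl⟩ := hsurj hy₂
  obtain ⟨t, -, rfl⟩ := intermediate_value_uIcc hF.continuousOn (Icc_subset_uIcc hvy)
  exact ⟨t, not_not.1 fun ht => hcompl ht hv, rfl⟩

theorem LipschitzWith.volume_image_Ioo_le {F : ℝ → ℝ} (hF : LipschitzWith 1 F) (u v : ℝ) :
    volume (F '' Ioo u v) ≤ ENNReal.ofReal (v - u) :=
  calc volume (F '' Ioo u v) ≤ Metric.ediam (F '' Ioo u v) := Real.volume_le_diam _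
    _ ≤ 1 * Metric.ediam (Ioo u v) := by simpa using hF.ediam_image_le (Ioo u v)
    _ = ENNReal.ofReal (v - u) := by rw [one_mul, Real.ediam_Ioo]

theorem eq_id_of_tsum_tail_lt {α : Type*} [MeasurableSpace α] {μ : Measure α}
    {V I J : ℕ → Set α} {σ : ℕ → ℕ} (hVI : ∀ n, V n ⊆ I n) (hI : Pairwise (Disjoint on I))
    (hJ : ∀ n, μ (J n) ≤ μ (V n)) (htail : ∀ n, ∑' j, μ (V (n + 1 + j)) < μ (V n))
    (hcover : ∀ n, V n ⊆ ⋃ i, J i) (hσ : ∀ n, J n ⊆ I (σ n)) : σ = id := by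
  funext n
  induction n using Nat.strong_induction_on with
  | _ n ih =>
  by_contra hσn
  have hsub : V n ⊆ ⋃ j, J (n + 1 + j) := by
    intro v hv
    obtain ⟨i, hi⟩ := mem_iUnion.1 (hcover n hv)
    have hni : n < i := by
      by_contra! hin
      have hσi : σ i ≠ n := by
        rcases hin.lt_or_eq with hin | rfl
        · rw [ih i hin]; exact hin.ne
        · exact hσn
      exact (hI hσi).le_bot ⟨hσ i hi, hVI n hv⟩
    exact mem_iUnion.2 ⟨i - (n + 1), by rwa [Nat.add_sub_cancel' hni]⟩
  have hle : μ (V n) ≤ ∑' j, μ (V (n + 1 + j)) :=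
    calc μ (V n) ≤ μ (⋃ j, J (n + 1 + j)) := measure_mono hsub
      _ ≤ ∑' j, μ (J (n + 1 + j)) := measure_iUnion_le _
      _ ≤ ∑' j, μ (V (n + 1 + j)) := ENNReal.tsum_le_tsum fun j => hJ _
  exact (hle.trans_lt (htail n)).false

section IntervalConfiguration

variable {a b : ℕ → ℝ} {m : ℕ → ℕ}

theorem exists_mem_Icc_or_mem_gap (hlt : ∀ n, a n < b n)
    (hgap : ∀ i j, b i < a j → a j - b i > b 0 - a 0) (hcof : ∀ x : ℝ, ∃ k l, b k < x ∧ x < a l)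
    (hm : ∀ n, b n < a (m n)) (x : ℝ) :
    ∃ n, x ∈ Icc (a n) (b n) ∨ x ∈ Ioo (b n) (a (m n)) := by
  obtain ⟨k, -, hk, -⟩ := hcof x
  have hstep : ∀ n, a n + (b 0 - a 0) ≤ a (m n) := fun n => by
    linarith [hgap n (m n) (hm n), hlt n]
  obtain ⟨n, hnx, hxn⟩ :=
    exists_le_lt_apply_of_add_le (sub_pos.2 (hlt 0)) hstep ((hlt k).le.trans hk.le)
  rcases le_or_gt x (b n) with hxb | hbx
  · exact ⟨n, Or.inl ⟨hnx, hxb⟩⟩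
  · exact ⟨n, Or.inr ⟨hbx, hxn⟩⟩

theorem disjoint_Ioo_left_iUnion_Icc (hlt : ∀ n, a n < b n)
    (hdisj : ∀ i j, i ≠ j → Disjoint (Icc (a i) (b i)) (Icc (a j) (b j)))
    (hgap : ∀ i j, b i < a j → a j - b i > b 0 - a 0) (k : ℕ) :
    Disjoint (Ioo (a k - (b 0 - a 0)) (a k)) (⋃ j, Icc (a j) (b j)) := by
  refine disjoint_left.2 fun x hx hxI => ?_
  obtain ⟨j, hj⟩ := mem_iUnion.1 hxI
  rcases eq_or_ne j k with rfl | hjk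
  · exact absurd hj.1 (not_le.2 hx.2)
  rcases lt_or_lt_of_disjoint_Icc (hlt j).le (hlt k).le (hdisj j k hjk) with h | h
  · linarith [hgap j k h, hj.2, hx.1]
  · linarith [hj.1, hx.2, hlt k]

theorem compl_iUnion_Ioo_subset_closure_gaps (hlt : ∀ n, a n < b n)
    (hdisj : ∀ i j, i ≠ j → Disjoint (Icc (a i) (b i)) (Icc (a j) (b j)))
    (hgap : ∀ i j, b i < a j → a j - b i > b 0 - a 0) (hcof : ∀ x : ℝ, ∃ k l, b k < x ∧ x < a l)
    (hm : ∀ n, b n < a (m n)) :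
    (⋃ n, Ioo (a n) (b n))ᶜ ⊆ closure (⋃ n, Ioo (b n) (a (m n))) := by
  have hclosure : ∀ n, Icc (b n) (a (m n)) ⊆ closure (⋃ n, Ioo (b n) (a (m n))) := fun n => by
    rw [← closure_Ioo (hm n).ne]
    exact closure_mono (subset_iUnion (fun n => Ioo (b n) (a (m n))) n)
  intro x hx
  obtain ⟨n, hxI | hxG⟩ := exists_mem_Icc_or_mem_gap hlt hgap hcof hm x
  swap
  · exact subset_closure (mem_iUnion_of_mem n hxG)
  rcases hxI.1.eq_or_lt with rfl | hax
  swap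
  · rcases hxI.2.eq_or_lt with rfl | hxb
    · exact hclosure n ⟨le_rfl, (hm n).le⟩
    · exact absurd (mem_iUnion_of_mem n (⟨hax, hxb⟩ : x ∈ Ioo (a n) (b n))) hx
  have hleft : Ioo (a n - (b 0 - a 0)) (a n) ⊆ ⋃ n, Ioo (b n) (a (m n)) := by
    intro y hy
    obtain ⟨k, hyI | hyG⟩ := exists_mem_Icc_or_mem_gap hlt hgap hcof hm y
    · exact absurd (mem_iUnion_of_mem k hyI)
        (disjoint_left.1 (disjoint_Ioo_left_iUnion_Icc hlt hdisj hgap n) hy)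
    · exact mem_iUnion_of_mem k hyG
  have hlen : a n - (b 0 - a 0) < a n := sub_lt_self _ (sub_pos.2 (hlt 0))
  exact closure_mono hleft (by rw [closure_Ioo hlen.ne]; exact right_mem_Icc.2 hlen.le)

theorem two_mul_volume_Ioo_succ_lt (hlt : ∀ n, a n < b n)
    (hhalf : ∀ n, 2 * (b (n + 1) - a (n + 1)) < b n - a n) (n : ℕ) :
    2 * volume (Ioo (a (n + 1)) (b (n + 1))) < volume (Ioo (a n) (b n)) := by
  rw [Real.volume_Ioo, Real.volume_Ioo, ← ENNReal.ofReal_ofNat 2,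
    ← ENNReal.ofReal_mul zero_le_two]
  exact (ENNReal.ofReal_lt_ofReal_iff (sub_pos.2 (hlt n))).2 (hhalf n)

theorem exists_image_Ioo_subset_Icc (hlt : ∀ n, a n < b n)
    (hdisj : ∀ i j, i ≠ j → Disjoint (Icc (a i) (b i)) (Icc (a j) (b j)))
    (hgap : ∀ i j, b i < a j → a j - b i > b 0 - a 0) (hm : ∀ n, b n < a (m n))
    (hmgap : ∀ n, Disjoint (Ioo (b n) (a (m n))) (⋃ k, Icc (a k) (b k)))
    {F : ℝ → ℝ} (hF : Continuous F)
    (hnonconst : ∀ n, ∃ x ∈ Ioo (a n) (b n), ∃ y ∈ Ioo (a n) (b n), F x ≠ F y)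
    (hnull : ∀ n, volume (F '' Ioo (a n) (b n) \ ⋃ k, Ioo (a k) (b k)) = 0) (n : ℕ) :
    ∃ k, F '' Ioo (a n) (b n) ⊆ Icc (a k) (b k) := by
  have hconn : (F '' Ioo (a n) (b n)).OrdConnected :=
    isPreconnected_iff_ordConnected.1 (isPreconnected_Ioo.image F hF.continuousOn)
  have hVI : ⋃ k, Ioo (a k) (b k) ⊆ ⋃ k, Icc (a k) (b k) :=
    iUnion_mono fun _ => Ioo_subset_Icc_self
  obtain ⟨x, hx, y, hy, hxy⟩ := hnonconst n
  obtain ⟨w, hwJ, hwV⟩ := hconn.inter_nonempty_of_volume_diff_eq_zero (hnull n)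
    (mem_image_of_mem F hx) (mem_image_of_mem F hy) hxy
  obtain ⟨k, hk⟩ := mem_iUnion.1 hwV
  exact ⟨k, hconn.subset_Icc_of_volume_diff_eq_zero (hnull n) (sub_lt_self _ (sub_pos.2 (hlt 0)))
    ((disjoint_Ioo_left_iUnion_Icc hlt hdisj hgap k).mono_right hVI) (hm k)
    ((hmgap k).mono_right hVI) ⟨w, hwJ, hk⟩⟩

theorem Ioo_subset_image_Ioo (hlt : ∀ n, a n < b n)
    (hdisj : ∀ i j, i ≠ j → Disjoint (Icc (a i) (b i)) (Icc (a j) (b j)))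
    (hhalf : ∀ n, 2 * (b (n + 1) - a (n + 1)) < b n - a n)
    (hgap : ∀ i j, b i < a j → a j - b i > b 0 - a 0) (hm : ∀ n, b n < a (m n))
    (hmgap : ∀ n, Disjoint (Ioo (b n) (a (m n))) (⋃ k, Icc (a k) (b k)))
    {F : ℝ → ℝ} (hF : LipschitzWith 1 F)
    (hcover : ⋃ n, Ioo (a n) (b n) ⊆ ⋃ n, F '' Ioo (a n) (b n))
    (hnonconst : ∀ n, ∃ x ∈ Ioo (a n) (b n), ∃ y ∈ Ioo (a n) (b n), F x ≠ F y) (k : ℕ) :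
    Ioo (a k) (b k) ⊆ F '' Ioo (a k) (b k) := by
  have hVd : Pairwise (Disjoint on fun n => Ioo (a n) (b n)) := fun i j hij =>
    (hdisj i j hij).mono Ioo_subset_Icc_self Ioo_subset_Icc_self
  have hJV : ∀ n, volume (F '' Ioo (a n) (b n)) ≤ volume (Ioo (a n) (b n)) := fun n =>
    (hF.volume_image_Ioo_le _ _).trans_eq Real.volume_Ioo.symm
  have hhalf' := two_mul_volume_Ioo_succ_lt hlt hhalf
  have hfin : volume (⋃ n, Ioo (a n) (b n)) ≠ ∞ := by
    rw [measure_iUnion hVd fun n => measurableSet_Ioo]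
    have hsum := ENNReal.tsum_le_two_mul_of_two_mul_succ_le (fun n => (hhalf' n).le) 0
    simp only [zero_add] at hsum
    exact ne_top_of_le_ne_top (ENNReal.mul_ne_top ENNReal.ofNat_ne_top measure_Ioo_lt_top.ne) hsum
  have hnull := measure_diff_iUnion_eq_zero (fun n => measurableSet_Ioo) hVd hfin hJV hcover
  choose σ hσ using
    exists_image_Ioo_subset_Icc hlt hdisj hgap hm hmgap hF.continuous hnonconst hnull
  have hσid : σ = id := eq_id_of_tsum_tail_lt (fun n => Ioo_subset_Icc_self) hdisj hJV
    (fun n => (ENNReal.tsum_le_two_mul_of_two_mul_succ_le (fun n => (hhalf' n).le) (n + 1)).trans_lt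
      (hhalf' n))
    (fun n => (subset_iUnion _ n).trans hcover) hσ
  intro v hv
  obtain ⟨i, hi⟩ := mem_iUnion.1 (hcover (mem_iUnion_of_mem k hv))
  obtain rfl : i = k := by
    by_contra hik
    have hσi := hσ i
    rw [hσid, id] at hσi
    exact (hdisj i k hik).le_bot ⟨hσi hi, Ioo_subset_Icc_self hv⟩
  exact hi

theorem eqOn_id_Icc_of_Ioo_subset_image (hlt : ∀ n, a n < b n) (hm : ∀ n, b n < a (m n))
    {F : ℝ → ℝ} (hF : LipschitzWith 1 F) (hsurj : ∀ k, Ioo (a k) (b k) ⊆ F '' Ioo (a k) (b k))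
    (n : ℕ) : EqOn F id (Icc (a n) (b n)) := by
  have hdich : ∀ k, EqOn F id (Icc (a k) (b k)) ∨
      EqOn F (fun u => a k + b k - u) (Icc (a k) (b k)) := fun k => by
    refine hF.eqOn_Icc_id_or_reflect (hlt k).le ?_
    calc Icc (a k) (b k) = closure (Ioo (a k) (b k)) := (closure_Ioo (hlt k).ne).symm
      _ ⊆ F '' Icc (a k) (b k) := closure_minimal ((hsurj k).trans (image_mono Ioo_subset_Icc_self))
          (isCompact_Icc.image hF.continuous).isClosed
  refine (hdich n).resolve_right fun hrefl => ?_
  have hbn : F (b n) = a n := by rw [hrefl (right_mem_Icc.2 (hlt n).le)]; ring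
  have hamn : a (m n) ≤ F (a (m n)) := by
    have hmem := left_mem_Icc.2 (hlt (m n)).le
    rcases hdich (m n) with h | h
    · rw [h hmem]; rfl
    · rw [h hmem]; linarith [hlt (m n)]
  have := hF.abs_sub_le (a (m n)) (b n)
  rw [hbn, abs_of_pos (sub_pos.2 (hm n)), abs_of_pos (by linarith [hlt n, hm n])] at this
  linarith [hlt n]

theorem condensationPoints_eq_compl_iUnion_Ioo (hlt : ∀ n, a n < b n)
    (hdisj : ∀ i j, i ≠ j → Disjoint (Icc (a i) (b i)) (Icc (a j) (b j)))
    (hgap : ∀ i j, b i < a j → a j - b i > b 0 - a 0) (hcof : ∀ x : ℝ, ∃ k l, b k < x ∧ x < a l)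
    (hm : ∀ n, b n < a (m n)) {X : Set ℝ} (hXcount : ∀ n, (Ioo (a n) (b n) ∩ X).Countable)
    (hXgap : ∀ W, IsOpen W → (W ∩ ⋃ n, Ioo (b n) (a (m n))).Nonempty → ¬ (W ∩ X).Countable) :
    condensationPoints X = (⋃ n, Ioo (a n) (b n))ᶜ := by
  refine Subset.antisymm (fun x hx hxV => ?_) ((compl_iUnion_Ioo_subset_closure_gaps hlt hdisj
    hgap hcof hm).trans (closure_subset_condensationPoints hXgap))
  obtain ⟨k, hk⟩ := mem_iUnion.1 hxV
  exact disjoint_left.1 (disjoint_condensationPoints_of_countable isOpen_Ioo (hXcount k)) hk hx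

theorem eqOn_id_Icc_of_bijOn (hlt : ∀ n, a n < b n)
    (hdisj : ∀ i j, i ≠ j → Disjoint (Icc (a i) (b i)) (Icc (a j) (b j)))
    (hhalf : ∀ n, 2 * (b (n + 1) - a (n + 1)) < b n - a n)
    (hgap : ∀ i j, b i < a j → a j - b i > b 0 - a 0) (hcof : ∀ x : ℝ, ∃ k l, b k < x ∧ x < a l)
    (hm : ∀ n, b n < a (m n))
    (hmgap : ∀ n, Disjoint (Ioo (b n) (a (m n))) (⋃ k, Icc (a k) (b k))) {X : Set ℝ}
    (hXrat : ∀ n (q : ℚ), (q : ℝ) ∈ Ioo (a n) (b n) → (q : ℝ) ∈ X)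
    (hXcount : ∀ n, (Ioo (a n) (b n) ∩ X).Countable)
    (hXgap : ∀ W, IsOpen W → (W ∩ ⋃ n, Ioo (b n) (a (m n))).Nonempty → ¬ (W ∩ X).Countable)
    {F : ℝ → ℝ} (hF : LipschitzWith 1 F) (hbij : BijOn F X X) (n : ℕ) :
    EqOn F id (Icc (a n) (b n)) := by
  have hcompl : MapsTo F (⋃ n, Ioo (a n) (b n))ᶜ (⋃ n, Ioo (a n) (b n))ᶜ :=
    condensationPoints_eq_compl_iUnion_Ioo hlt hdisj hgap hcof hm hXcount hXgap ▸
      mapsTo_condensationPoints hF.continuous hbij.mapsTo hbij.injOn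
  have hbetween : ∀ v ∈ ⋃ n, Ioo (a n) (b n), ∃ y₁ ∈ X, ∃ y₂ ∈ X, v ∈ Icc y₁ y₂ := by
    intro v hv
    obtain ⟨k, hk⟩ := mem_iUnion.1 hv
    obtain ⟨q₁, hq₁⟩ := exists_rat_btwn hk.1
    obtain ⟨q₂, hq₂⟩ := exists_rat_btwn hk.2
    exact ⟨q₁, hXrat k q₁ ⟨hq₁.1, hq₁.2.trans hk.2⟩, q₂, hXrat k q₂ ⟨hk.1.trans hq₂.1, hq₂.2⟩,
      hq₁.2.le, hq₂.1.le⟩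
  have hcover : ⋃ n, Ioo (a n) (b n) ⊆ ⋃ n, F '' Ioo (a n) (b n) := by
    rw [← image_iUnion]
    exact subset_image_of_mapsTo_compl hF.continuous hbij.surjOn hcompl hbetween
  have hnonconst : ∀ n, ∃ x ∈ Ioo (a n) (b n), ∃ y ∈ Ioo (a n) (b n), F x ≠ F y := by
    intro n
    obtain ⟨q₁, hq₁⟩ := exists_rat_btwn (hlt n)
    obtain ⟨q₂, hq₂⟩ := exists_rat_btwn hq₁.2
    have h₁ : (q₁ : ℝ) ∈ Ioo (a n) (b n) := ⟨hq₁.1, hq₂.1.trans hq₂.2⟩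
    have h₂ : (q₂ : ℝ) ∈ Ioo (a n) (b n) := ⟨hq₁.1.trans hq₂.1, hq₂.2⟩
    exact ⟨q₁, h₁, q₂, h₂, fun h => hq₂.1.ne (hbij.injOn (hXrat n q₁ h₁) (hXrat n q₂ h₂) h)⟩
  exact eqOn_id_Icc_of_Ioo_subset_image hlt hm hF
    (Ioo_subset_image_Ioo hlt hdisj hhalf hgap hm hmgap hF hcover hnonconst) n

end IntervalConfiguration

def ratIccUnion (a b : ℕ → ℝ) (A : ℕ → Set ℝ) : Set ℝ :=
  ⋃ n, (({x : ℝ | ∃ q : ℚ, (q : ℝ) = x} ∩ Icc (a n) (b n)) ∪ A n)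

section RatIccUnion

variable {a b : ℕ → ℝ} {A : ℕ → Set ℝ}

theorem mem_ratIccUnion {x : ℝ} :
    x ∈ ratIccUnion a b A ↔ ∃ n, ((∃ q : ℚ, (q : ℝ) = x) ∧ x ∈ Icc (a n) (b n)) ∨ x ∈ A n := by
  simp only [ratIccUnion, mem_iUnion, mem_union, mem_inter_iff, mem_ofPred_eq]

theorem rat_mem_ratIccUnion {n : ℕ} {q : ℚ} (hq : (q : ℝ) ∈ Icc (a n) (b n)) :
    (q : ℝ) ∈ ratIccUnion a b A :=
  mem_ratIccUnion.2 ⟨n, Or.inl ⟨⟨q, rfl⟩, hq⟩⟩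

theorem subset_ratIccUnion (n : ℕ) : A n ⊆ ratIccUnion a b A :=
  fun _ hx => mem_ratIccUnion.2 ⟨n, Or.inr hx⟩

theorem countable_Ioo_inter_ratIccUnion {m : ℕ → ℕ} (hA : ∀ n, A n ⊆ Ioo (b n) (a (m n)))
    (hmgap : ∀ n, Disjoint (Ioo (b n) (a (m n))) (⋃ k, Icc (a k) (b k))) (n : ℕ) :
    (Ioo (a n) (b n) ∩ ratIccUnion a b A).Countable := by
  refine (countable_range ((↑) : ℚ → ℝ)).mono fun x ⟨hxI, hxX⟩ => ?_
  obtain ⟨k, ⟨hq, -⟩ | hxA⟩ := mem_ratIccUnion.1 hxX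
  · exact hq
  · exact absurd (mem_iUnion_of_mem (s := fun k => Icc (a k) (b k)) n (Ioo_subset_Icc_self hxI))
      (disjoint_left.1 (hmgap k) (hA k hxA))

theorem not_countable_inter_ratIccUnion {m : ℕ → ℕ}
    (hAcard : ∀ n, ∀ U : Set ℝ, IsOpen U → U.Nonempty → U ⊆ Ioo (b n) (a (m n)) →
      Cardinal.mk ↥(A n ∩ U) = Cardinal.aleph 1)
    {W : Set ℝ} (hW : IsOpen W) (hWG : (W ∩ ⋃ n, Ioo (b n) (a (m n))).Nonempty) :
    ¬ (W ∩ ratIccUnion a b A).Countable := by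
  obtain ⟨x, hxW, hxG⟩ := hWG
  obtain ⟨k, hk⟩ := mem_iUnion.1 hxG
  have hcard := hAcard k (W ∩ Ioo (b k) (a (m k))) (hW.inter isOpen_Ioo) ⟨x, hxW, hk⟩
    inter_subset_right
  intro hcount
  refine (Cardinal.le_aleph0_iff_set_countable.2 (hcount.mono ?_)).not_gt
    (hcard ▸ Cardinal.aleph0_lt_aleph_one)
  exact fun y hy => ⟨hy.2.1, subset_ratIccUnion k hy.1⟩

end RatIccUnion

theorem stmt0_general
    (a b : ℕ → ℝ)
    (hlt : ∀ n, a n < b n)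
    (hdisj : ∀ i j, i ≠ j → Disjoint (Set.Icc (a i) (b i)) (Set.Icc (a j) (b j)))
    (hhalf : ∀ n, 2 * (b (n + 1) - a (n + 1)) < b n - a n)
    (hgap : ∀ i j, b i < a j → a j - b i > b 0 - a 0)
    (hcof : ∀ x : ℝ, ∃ k l, b k < x ∧ x < a l)
    (m : ℕ → ℕ)
    (hm : ∀ n, b n < a (m n))
    (hmgap : ∀ n, Disjoint (Set.Ioo (b n) (a (m n))) (⋃ k, Set.Icc (a k) (b k)))
    (A : ℕ → Set ℝ)
    (hA : ∀ n, A n ⊆ Set.Ioo (b n) (a (m n)))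
    (hAcard : ∀ n, ∀ U : Set ℝ, IsOpen U → U.Nonempty → U ⊆ Set.Ioo (b n) (a (m n)) →
      Cardinal.mk ↥(A n ∩ U) = Cardinal.aleph 1)
    (X : Set ℝ)
    (hX : X = ⋃ n, (({x : ℝ | ∃ q : ℚ, (q : ℝ) = x} ∩ Set.Icc (a n) (b n)) ∪ A n))
    (f : ℝ → ℝ)
    (hbij : Set.BijOn f X X)
    (hne : ∀ x ∈ X, ∀ y ∈ X, |f x - f y| ≤ |x - y|) :
    ∀ x ∈ X, f x = x := by
  change X = ratIccUnion a b A at hX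
  subst hX
  have hf : LipschitzOnWith 1 f (ratIccUnion a b A) :=
    lipschitzOnWith_iff_dist_le_mul.2 fun x hx y hy => by
      simpa [Real.dist_eq] using hne x hx y hy
  obtain ⟨F, hF, hfF⟩ := hf.extend_real
  have hid := eqOn_id_Icc_of_bijOn hlt hdisj hhalf hgap hcof hm hmgap
    (fun n q hq => rat_mem_ratIccUnion (Ioo_subset_Icc_self hq))
    (countable_Ioo_inter_ratIccUnion hA hmgap)
    (fun W hW hWG => not_countable_inter_ratIccUnion hAcard hW hWG) hF (hbij.congr hfF)
  intro x hx
  rw [hfF hx]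
  obtain ⟨n, ⟨-, hxI⟩ | hxA⟩ := mem_ratIccUnion.1 hx
  · exact hid n hxI
  · exact hF.eqOn_Icc_of_apply_eq (hid n (right_mem_Icc.2 (hlt n).le))
      (hid (m n) (left_mem_Icc.2 (hlt (m n)).le)) (Ioo_subset_Icc_self (hA n hxA))

theorem stmt0
    (a b : ℕ → ℝ)
    (hlt : ∀ n, a n < b n)
    (haq : ∀ n, ∃ q : ℚ, (q : ℝ) = a n)
    (hbq : ∀ n, ∃ q : ℚ, (q : ℝ) = b n)
    (hdisj : ∀ i j, i ≠ j → Disjoint (Set.Icc (a i) (b i)) (Set.Icc (a j) (b j)))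
    (hhalf : ∀ n, 2 * (b (n + 1) - a (n + 1)) < b n - a n)
    (hgap : ∀ i j, b i < a j → a j - b i > b 0 - a 0)
    (h01 : a 0 < a 1)
    (hcof : ∀ x : ℝ, ∃ k l, b k < x ∧ x < a l)
    (m : ℕ → ℕ)
    (hm : ∀ n, b n < a (m n))
    (hmgap : ∀ n, Disjoint (Set.Ioo (b n) (a (m n))) (⋃ k, Set.Icc (a k) (b k)))
    (A : ℕ → Set ℝ)
    (hA : ∀ n, A n ⊆ Set.Ioo (b n) (a (m n)))
    (hAcard : ∀ n, ∀ U : Set ℝ, IsOpen U → U.Nonempty → U ⊆ Set.Ioo (b n) (a (m n)) →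
      Cardinal.mk ↥(A n ∩ U) = Cardinal.aleph 1)
    (X : Set ℝ)
    (hX : X = ⋃ n, (({x : ℝ | ∃ q : ℚ, (q : ℝ) = x} ∩ Set.Icc (a n) (b n)) ∪ A n))
    (f : ℝ → ℝ)
    (hbij : Set.BijOn f X X)
    (hne : ∀ x ∈ X, ∀ y ∈ X, |f x - f y| ≤ |x - y|) :
    ∀ x ∈ X, f x = x :=
  stmt0_general a b hlt hdisj hhalf hgap hcof m hm hmgap A hA hAcard X hX f hbij hne
end

section
/- The set X is plastic: every non-expansive bijection f : X → X is an isometry of X. -/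
theorem stmt1
    (a b : ℕ → ℝ)
    (hlt : ∀ n, a n < b n)
    (haq : ∀ n, ∃ q : ℚ, (q : ℝ) = a n)
    (hbq : ∀ n, ∃ q : ℚ, (q : ℝ) = b n)
    (hdisj : ∀ i j, i ≠ j → Disjoint (Set.Icc (a i) (b i)) (Set.Icc (a j) (b j)))
    (hhalf : ∀ n, 2 * (b (n + 1) - a (n + 1)) < b n - a n)
    (hgap : ∀ i j, b i < a j → a j - b i > b 0 - a 0)
    (h01 : a 0 < a 1)
    (hcof : ∀ x : ℝ, ∃ k l, b k < x ∧ x < a l)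
    (m : ℕ → ℕ)
    (hm : ∀ n, b n < a (m n))
    (hmgap : ∀ n, Disjoint (Set.Ioo (b n) (a (m n))) (⋃ k, Set.Icc (a k) (b k)))
    (A : ℕ → Set ℝ)
    (hA : ∀ n, A n ⊆ Set.Ioo (b n) (a (m n)))
    (hAcard : ∀ n, ∀ U : Set ℝ, IsOpen U → U.Nonempty → U ⊆ Set.Ioo (b n) (a (m n)) →
      Cardinal.mk ↥(A n ∩ U) = Cardinal.aleph 1)
    (X : Set ℝ)
    (hX : X = ⋃ n, (({x : ℝ | ∃ q : ℚ, (q : ℝ) = x} ∩ Set.Icc (a n) (b n)) ∪ A n))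
    (f : ℝ → ℝ)
    (hbij : Set.BijOn f X X)
    (hne : ∀ x ∈ X, ∀ y ∈ X, |f x - f y| ≤ |x - y|) :
    ∀ x ∈ X, ∀ y ∈ X, |f x - f y| = |x - y| := by
  -- basic facts
  have hL : 0 < b 0 - a 0 := sub_pos.mpr (hlt 0)
  have hlen : ∀ n, 0 < b n - a n := fun n => sub_pos.mpr (hlt n)
  have hstep : ∀ n, b (n + 1) - a (n + 1) < b n - a n := by
    intro n; have := hhalf n; have := hlen (n + 1); linarith
  have hSA : StrictAnti (fun n => b n - a n) := strictAnti_nat_of_succ_lt hstep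
  -- order of distinct intervals
  have horder : ∀ i j, i ≠ j → b i < a j ∨ b j < a i := by
    intro i j hij
    by_contra h
    push_neg at h
    obtain ⟨h1, h2⟩ := h
    have hmem1 : max (a i) (a j) ∈ Set.Icc (a i) (b i) :=
      ⟨le_max_left _ _, max_le (hlt i).le h1⟩
    have hmem2 : max (a i) (a j) ∈ Set.Icc (a j) (b j) :=
      ⟨le_max_right _ _, max_le h2 (hlt j).le⟩
    exact Set.disjoint_left.mp (hdisj i j hij) hmem1 hmem2
  -- separation of right endpoints
  have hsepb : ∀ i j, b i < b j → b j - b i > b 0 - a 0 := by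
    intro i j h
    have hij : i ≠ j := by rintro rfl; exact lt_irrefl _ h
    rcases horder i j hij with h' | h'
    · have := hgap i j h'; have := hlt j; linarith
    · have := hlt i; linarith
  -- existence of a maximal b k below a point
  have hmax : ∀ x : ℝ, (∃ k, b k < x) → ∃ i, b i < x ∧ ∀ k, b k < x → b k ≤ b i := by
    intro x hex
    obtain ⟨k0, hk0⟩ := hex
    have aux : ∀ N : ℕ, ∀ k, b k < x → x - b k < N * (b 0 - a 0) →
        ∃ i, b i < x ∧ ∀ k', b k' < x → b k' ≤ b i := by
      intro N
      induction N with
      | zero => intro k hk hb; norm_num at hb; linarith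
      | succ N ih =>
        intro k hk hb
        by_cases hall : ∀ k', b k' < x → b k' ≤ b k
        · exact ⟨k, hk, hall⟩
        · push_neg at hall
          obtain ⟨k', hk', hgt⟩ := hall
          have hsep := hsepb k k' hgt
          apply ih k' hk'
          push_cast at hb
          linarith
    obtain ⟨N, hN⟩ := exists_nat_gt ((x - b k0) / (b 0 - a 0))
    have hN' : x - b k0 < N * (b 0 - a 0) := by
      rw [div_lt_iff₀ hL] at hN; linarith
    exact aux N k0 hk0 hN'
  -- chain lemma : every a j is in some closed gap
  have hchain : ∀ j, ∃ i, b i ≤ a j ∧ a j ≤ a (m i) := by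
    intro j
    obtain ⟨k, l, hk, _⟩ := hcof (a j)
    obtain ⟨i, hix, himax⟩ := hmax (a j) ⟨k, hk⟩
    by_cases hmi : m i = j
    · exact ⟨i, hix.le, by rw [hmi]⟩
    · rcases horder (m i) j hmi with h | h
      · exfalso
        have h1 := himax (m i) h
        have h2 := hm i
        have h3 := hlt (m i)
        linarith
      · exact ⟨i, hix.le, by have := hlt j; linarith⟩
  -- closed gaps avoid open blocks
  have hHnotIoo : ∀ x : ℝ, (∃ n, b n ≤ x ∧ x ≤ a (m n)) → ∀ k, x ∉ Set.Ioo (a k) (b k) := by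
    rintro x ⟨n, hn1, hn2⟩ k hx
    rcases eq_or_lt_of_le hn1 with heq | h1
    · by_cases hnk : n = k
      · subst hnk
        rw [← heq] at hx
        exact lt_irrefl _ hx.2
      · have hmem1 : x ∈ Set.Icc (a n) (b n) := by
          rw [← heq]; exact ⟨(hlt n).le, le_refl _⟩
        exact Set.disjoint_left.mp (hdisj n k hnk) hmem1 ⟨hx.1.le, hx.2.le⟩
    · rcases eq_or_lt_of_le hn2 with heq2 | h2
      · by_cases hnk : m n = k
        · subst hnk
          rw [heq2] at hx
          exact lt_irrefl _ hx.1
        · have hmem1 : x ∈ Set.Icc (a (m n)) (b (m n)) := by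
            rw [heq2]; exact ⟨le_refl _, (hlt (m n)).le⟩
          exact Set.disjoint_left.mp (hdisj (m n) k hnk) hmem1 ⟨hx.1.le, hx.2.le⟩
      · exact Set.disjoint_left.mp (hmgap n) ⟨h1, h2⟩
          (Set.mem_iUnion.mpr ⟨k, hx.1.le, hx.2.le⟩)
  -- memberships
  have hAX : ∀ n, A n ⊆ X := by
    intro n y hy
    rw [hX]; exact Set.mem_iUnion.mpr ⟨n, Or.inr hy⟩
  have haX : ∀ n, a n ∈ X := by
    intro n
    rw [hX]; exact Set.mem_iUnion.mpr ⟨n, Or.inl ⟨haq n, le_refl _, (hlt n).le⟩⟩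
  have hbX : ∀ n, b n ∈ X := by
    intro n
    rw [hX]; exact Set.mem_iUnion.mpr ⟨n, Or.inl ⟨hbq n, (hlt n).le, le_refl _⟩⟩
  -- X points outside the closed gaps are interior block points
  have hXnotH : ∀ p, p ∈ X → ¬(∃ n, b n ≤ p ∧ p ≤ a (m n)) →
      ∃ i, p ∈ Set.Ioo (a i) (b i) := by
    intro p hp hnH
    have hp' := hp
    rw [hX] at hp'
    obtain ⟨s, hs⟩ := Set.mem_iUnion.mp hp'
    rcases hs with h | h
    · obtain ⟨hq, hIcc⟩ := h
      refine ⟨s, ?_, ?_⟩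
      · rcases eq_or_lt_of_le hIcc.1 with he | h'
        · exfalso
          obtain ⟨i, hi1, hi2⟩ := hchain s
          exact hnH ⟨i, by rw [← he]; exact hi1, by rw [← he]; exact hi2⟩
        · exact h'
      · rcases eq_or_lt_of_le hIcc.2 with he | h'
        · exfalso
          exact hnH ⟨s, by rw [he], by rw [he]; exact (hm s).le⟩
        · exact h'
    · exact absurd ⟨s, (hA s h).1.le, (hA s h).2.le⟩ hnH
  -- KEY cardinality lemma : f maps closed-gap points of X to closed-gap points
  have hfH : ∀ x, x ∈ X → (∃ n, b n ≤ x ∧ x ≤ a (m n)) →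
      (∃ n, b n ≤ f x ∧ f x ≤ a (m n)) := by
    intro x hxX hxH
    by_contra hfx
    have hfxX : f x ∈ X := hbij.mapsTo hxX
    obtain ⟨k, hk⟩ := hXnotH (f x) hfxX hfx
    set r := min (f x - a k) (b k - f x) with hr
    have hr1 : r ≤ f x - a k := min_le_left _ _
    have hr2 : r ≤ b k - f x := min_le_right _ _
    have hr0 : 0 < r := lt_min (by linarith [hk.1]) (by linarith [hk.2])
    -- the target window is countable
    have hsub2 : X ∩ Set.Ioo (f x - r) (f x + r) ⊆ Set.range ((↑) : ℚ → ℝ) := by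
      rintro y ⟨hyX, hyI⟩
      have hyk : y ∈ Set.Icc (a k) (b k) :=
        ⟨by linarith [hyI.1], by linarith [hyI.2]⟩
      have hyX' := hyX
      rw [hX] at hyX'
      obtain ⟨s, hs⟩ := Set.mem_iUnion.mp hyX'
      rcases hs with h | h
      · obtain ⟨⟨q, hq⟩, _⟩ := h
        exact ⟨q, hq⟩
      · exact absurd (Set.mem_iUnion.mpr ⟨k, hyk⟩)
          (Set.disjoint_left.mp (hmgap s) (hA s h))
    have hcnt : (X ∩ Set.Ioo (f x - r) (f x + r)).Countable :=
      (Set.countable_range _).mono hsub2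
    -- the source window has aleph 1 many points of X
    obtain ⟨n, hn1, hn2⟩ := hxH
    set U := Set.Ioo (b n) (a (m n)) ∩ Set.Ioo (x - r) (x + r) with hU
    have htlt : max (b n) (x - r) < min (a (m n)) (x + r) := by
      apply max_lt
      · exact lt_min (hm n) (by linarith)
      · exact lt_min (by linarith) (by linarith)
    have hUne : U.Nonempty := by
      refine ⟨(max (b n) (x - r) + min (a (m n)) (x + r)) / 2, ⟨?_, ?_⟩, ?_, ?_⟩
      · have := le_max_left (b n) (x - r); linarith
      · have := min_le_left (a (m n)) (x + r); linarith
      · have := le_max_right (b n) (x - r); linarith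
      · have := min_le_right (a (m n)) (x + r); linarith
    have hcard1 := hAcard n U (IsOpen.inter isOpen_Ioo isOpen_Ioo) hUne
      Set.inter_subset_left
    have hsub1 : A n ∩ U ⊆ X ∩ Set.Ioo (x - r) (x + r) := by
      rintro y ⟨hy1, hy2⟩
      exact ⟨hAX n hy1, hy2.2⟩
    have hbig : Cardinal.aleph 1 ≤ Cardinal.mk (X ∩ Set.Ioo (x - r) (x + r) : Set ℝ) := by
      rw [← hcard1]
      exact Cardinal.mk_le_mk_of_subset hsub1
    -- injection from source window into target window
    have hmaps : ∀ y, y ∈ X ∩ Set.Ioo (x - r) (x + r) →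
        f y ∈ X ∩ Set.Ioo (f x - r) (f x + r) := by
      rintro y ⟨hyX, hyI⟩
      refine ⟨hbij.mapsTo hyX, ?_⟩
      have h1 : |f y - f x| ≤ |y - x| := hne y hyX x hxX
      have h2 : |y - x| < r := abs_sub_lt_iff.mpr ⟨by linarith [hyI.2], by linarith [hyI.1]⟩
      have h3 := abs_lt.mp (lt_of_le_of_lt h1 h2)
      exact ⟨by linarith [h3.1], by linarith [h3.2]⟩
    have hinj : Cardinal.mk (X ∩ Set.Ioo (x - r) (x + r) : Set ℝ) ≤
        Cardinal.mk (X ∩ Set.Ioo (f x - r) (f x + r) : Set ℝ) := by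
      apply Cardinal.mk_le_of_injective
        (f := fun y : (X ∩ Set.Ioo (x - r) (x + r) : Set ℝ) => (⟨f y.1, hmaps y.1 y.2⟩ :
          (X ∩ Set.Ioo (f x - r) (f x + r) : Set ℝ)))
      rintro ⟨y, hy⟩ ⟨z, hz⟩ h
      simp only [Subtype.mk.injEq] at h ⊢
      exact hbij.injOn hy.1 hz.1 h
    have hsmall : Cardinal.mk (X ∩ Set.Ioo (f x - r) (f x + r) : Set ℝ) ≤ Cardinal.aleph0 := by
      have := hcnt.to_subtype
      exact Cardinal.mk_le_aleph0
    have : Cardinal.aleph 1 ≤ Cardinal.aleph0 := le_trans hbig (le_trans hinj hsmall)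
    exact absurd this (not_le.mpr Cardinal.aleph0_lt_aleph_one)
  have hfnotIoo : ∀ z, z ∈ X → (∃ n, b n ≤ z ∧ z ≤ a (m n)) →
      ∀ k, f z ∉ Set.Ioo (a k) (b k) :=
    fun z hz hH k => hHnotIoo (f z) (hfH z hz hH) k
  -- anchor lemma : preimages of middle rationals of block n live in block n
  have anchor : ∀ n (c : ℝ), c ∈ X → a n + (b (n + 1) - a (n + 1)) < c →
      c < b n - (b (n + 1) - a (n + 1)) →
      (∀ i, i < n → ∀ p, p ∈ X → p ∈ Set.Ioo (a i) (b i) → f p ≠ c) →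
      ∃ p, p ∈ X ∧ p ∈ Set.Ioo (a n) (b n) ∧ f p = c := by
    intro n c hcX hc1 hc2 hex
    obtain ⟨p, hpX, hfp⟩ := hbij.surjOn hcX
    have hl' := hlen (n + 1)
    have hcI : c ∈ Set.Ioo (a n) (b n) := ⟨by linarith, by linarith⟩
    have hpnH : ¬(∃ n', b n' ≤ p ∧ p ≤ a (m n')) := by
      intro hH
      exact hfnotIoo p hpX hH n (by rw [hfp]; exact hcI)
    obtain ⟨i, hpI⟩ := hXnotH p hpX hpnH
    have hfai := hfnotIoo (a i) (haX i) (hchain i) n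
    have hlip : |f (a i) - c| ≤ b i - a i := by
      have h := hne (a i) (haX i) p hpX
      rw [hfp] at h
      have habs : |a i - p| = p - a i := by
        rw [abs_sub_comm]; exact abs_of_pos (by linarith [hpI.1])
      rw [habs] at h
      linarith [hpI.2]
    have hgt : b (n + 1) - a (n + 1) < b i - a i := by
      simp only [Set.mem_Ioo, not_and, not_lt] at hfai
      obtain ⟨hlip1, hlip2⟩ := abs_sub_le_iff.mp hlip
      by_cases hfa : f (a i) ≤ a n
      · linarith
      · have h2 := hfai (by linarith [not_le.mp hfa])
        linarith
    have hile : i ≤ n := by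
      by_contra hgt'
      push_neg at hgt'
      have : b i - a i ≤ b (n + 1) - a (n + 1) := hSA.antitone hgt'
      linarith
    rcases Nat.lt_or_ge i n with hlt' | hge
    · exact absurd hfp (hex i hlt' p hpX hpI)
    · have hieq : i = n := le_antisymm hile hge
      exact ⟨p, hpX, hieq ▸ hpI, hfp⟩
  -- dichotomy : each block is fixed or reflected
  have dich : ∀ n, (∀ i, i < n → ∀ p, p ∈ X → p ∈ Set.Ioo (a i) (b i) →
        f p ∉ Set.Ioo (a n) (b n)) →
      (f (a n) = a n ∧ f (b n) = b n) ∨ (f (a n) = b n ∧ f (b n) = a n) := by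
    intro n hex
    have hl' := hlen (n + 1)
    have hl := hlen n
    have hh := hhalf n
    obtain ⟨q₁, hq₁⟩ := exists_rat_btwn
      (show a n + (b (n + 1) - a (n + 1)) < (a n + b n) / 2 by linarith)
    obtain ⟨q₂, hq₂⟩ := exists_rat_btwn
      (show (a n + b n) / 2 < b n - (b (n + 1) - a (n + 1)) by linarith)
    set c₁ := (q₁ : ℝ)
    set c₂ := (q₂ : ℝ)
    have hc₁X : c₁ ∈ X := by
      rw [hX]
      exact Set.mem_iUnion.mpr ⟨n, Or.inl ⟨⟨q₁, rfl⟩,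
        by constructor <;> [linarith [hq₁.1]; linarith [hq₁.2]]⟩⟩
    have hc₂X : c₂ ∈ X := by
      rw [hX]
      exact Set.mem_iUnion.mpr ⟨n, Or.inl ⟨⟨q₂, rfl⟩,
        by constructor <;> [linarith [hq₂.1]; linarith [hq₂.2]]⟩⟩
    have hex₁ : ∀ i, i < n → ∀ p, p ∈ X → p ∈ Set.Ioo (a i) (b i) → f p ≠ c₁ :=
      fun i hi p hpX hpI hfp => hex i hi p hpX hpI
        (by rw [hfp]; exact ⟨by linarith [hq₁.1], by linarith [hq₁.2]⟩)
    have hex₂ : ∀ i, i < n → ∀ p, p ∈ X → p ∈ Set.Ioo (a i) (b i) → f p ≠ c₂ :=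
      fun i hi p hpX hpI hfp => hex i hi p hpX hpI
        (by rw [hfp]; exact ⟨by linarith [hq₂.1], by linarith [hq₂.2]⟩)
    obtain ⟨p₁, hp₁X, hp₁I, hfp₁⟩ := anchor n c₁ hc₁X (by linarith [hq₁.1])
      (by linarith [hq₁.2]) hex₁
    obtain ⟨p₂, hp₂X, hp₂I, hfp₂⟩ := anchor n c₂ hc₂X (by linarith [hq₂.1])
      (by linarith [hq₂.2]) hex₂
    have A1 : |f (a n) - c₁| ≤ p₁ - a n := by
      have h := hne (a n) (haX n) p₁ hp₁X
      rw [hfp₁] at h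
      have habs : |a n - p₁| = p₁ - a n := by
        rw [abs_sub_comm]; exact abs_of_pos (by linarith [hp₁I.1])
      rw [habs] at h; exact h
    have A2 : |f (a n) - c₂| ≤ p₂ - a n := by
      have h := hne (a n) (haX n) p₂ hp₂X
      rw [hfp₂] at h
      have habs : |a n - p₂| = p₂ - a n := by
        rw [abs_sub_comm]; exact abs_of_pos (by linarith [hp₂I.1])
      rw [habs] at h; exact h
    have B1 : |f (b n) - c₁| ≤ b n - p₁ := by
      have h := hne (b n) (hbX n) p₁ hp₁X
      rw [hfp₁] at h
      have habs : |b n - p₁| = b n - p₁ := abs_of_pos (by linarith [hp₁I.2])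
      rw [habs] at h; exact h
    have B2 : |f (b n) - c₂| ≤ b n - p₂ := by
      have h := hne (b n) (hbX n) p₂ hp₂X
      rw [hfp₂] at h
      have habs : |b n - p₂| = b n - p₂ := abs_of_pos (by linarith [hp₂I.2])
      rw [habs] at h; exact h
    obtain ⟨A1a, A1b⟩ := abs_sub_le_iff.mp A1
    obtain ⟨A2a, A2b⟩ := abs_sub_le_iff.mp A2
    obtain ⟨B1a, B1b⟩ := abs_sub_le_iff.mp B1
    obtain ⟨B2a, B2b⟩ := abs_sub_le_iff.mp B2
    have hfa := hHnotIoo (f (a n)) (hfH (a n) (haX n) (hchain n)) n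
    have hfb := hHnotIoo (f (b n)) (hfH (b n) (hbX n) ⟨n, le_refl _, (hm n).le⟩) n
    simp only [Set.mem_Ioo, not_and, not_lt] at hfa hfb
    by_cases ha : f (a n) ≤ a n
    · by_cases hb : f (b n) ≤ a n
      · exfalso
        linarith [hq₂.1]
      · have hb' : b n ≤ f (b n) := hfb (not_le.mp hb)
        left
        constructor
        · have h2 : p₁ ≤ c₁ := by linarith
        -- c₁ ≤ p₁ from A1b with ha
          exact le_antisymm ha (by linarith)
        · have h1 : c₂ ≤ p₂ := by linarith
          exact le_antisymm (by linarith) hb'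
    · have ha' : b n ≤ f (a n) := hfa (not_le.mp ha)
      by_cases hb : f (b n) ≤ a n
      · right
        have h1 : a n + b n - c₁ ≤ p₁ := by linarith
        have h2 : p₁ ≤ a n + b n - c₁ := by linarith
        constructor
        · exact le_antisymm (by linarith) ha'
        · exact le_antisymm hb (by linarith)
      · exfalso
        have hb' : b n ≤ f (b n) := hfb (not_le.mp hb)
        linarith [hq₁.2]
  -- main induction : all endpoints are fixed
  have main : ∀ n, f (a n) = a n ∧ f (b n) = b n := by
    intro n
    induction n using Nat.strong_induction_on with
    | _ n IH =>
    have hexIH : ∀ i, i < n → ∀ p, p ∈ X → p ∈ Set.Ioo (a i) (b i) → ∀ k, i ≠ k →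
        f p ∉ Set.Ioo (a k) (b k) := by
      intro i hi p hpX hpI k hik hfpI
      obtain ⟨hia, hib⟩ := IH i hi
      have h1 := hne p hpX (a i) (haX i)
      rw [hia] at h1
      have h2 := hne p hpX (b i) (hbX i)
      rw [hib] at h2
      have e1 : |p - a i| = p - a i := abs_of_pos (by linarith [hpI.1])
      have e2 : |p - b i| = b i - p := by
        rw [abs_sub_comm]; exact abs_of_pos (by linarith [hpI.2])
      rw [e1] at h1
      rw [e2] at h2
      obtain ⟨h1a, h1b⟩ := abs_sub_le_iff.mp h1
      obtain ⟨h2a, h2b⟩ := abs_sub_le_iff.mp h2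
      have hfpp : f p = p := le_antisymm (by linarith) (by linarith)
      rw [hfpp] at hfpI
      exact Set.disjoint_left.mp (hdisj i k hik) ⟨hpI.1.le, hpI.2.le⟩
        ⟨hfpI.1.le, hfpI.2.le⟩
    by_cases hn0 : n = 0
    · subst hn0
      rcases dich 0 (fun i hi => absurd hi (Nat.not_lt_zero i)) with h | h
      · exact h
      · exfalso
        have hb0a1 : b 0 < a 1 := by
          rcases horder 0 1 (by omega) with h' | h'
          · exact h'
          · exfalso; have := hlt 1; linarith
        have hex1 : ∀ i, i < 1 → ∀ p, p ∈ X → p ∈ Set.Ioo (a i) (b i) →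
            f p ∉ Set.Ioo (a 1) (b 1) := by
          intro i hi p hpX hpI hfpI
          have hi0 : i = 0 := by omega
          subst hi0
          have h1 := hne p hpX (a 0) (haX 0)
          rw [h.1] at h1
          have h2 := hne p hpX (b 0) (hbX 0)
          rw [h.2] at h2
          have e1 : |p - a 0| = p - a 0 := abs_of_pos (by linarith [hpI.1])
          have e2 : |p - b 0| = b 0 - p := by
            rw [abs_sub_comm]; exact abs_of_pos (by linarith [hpI.2])
          rw [e1] at h1
          rw [e2] at h2
          obtain ⟨h1a, h1b⟩ := abs_sub_le_iff.mp h1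
          obtain ⟨h2a, h2b⟩ := abs_sub_le_iff.mp h2
          have : f p ≤ b 0 := by linarith
          linarith [hfpI.1]
        rcases dich 1 hex1 with h1 | h1
        · have hthis := hne (a 1) (haX 1) (b 0) (hbX 0)
          rw [h1.1, h.2] at hthis
          rw [abs_of_pos (show (0:ℝ) < a 1 - a 0 by linarith),
            abs_of_pos (show (0:ℝ) < a 1 - b 0 by linarith)] at hthis
          linarith [hlt 0]
        · have hthis := hne (a 1) (haX 1) (b 0) (hbX 0)
          rw [h1.1, h.2] at hthis
          rw [abs_of_pos (show (0:ℝ) < b 1 - a 0 by linarith [hlt 1]),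
            abs_of_pos (show (0:ℝ) < a 1 - b 0 by linarith)] at hthis
          linarith [hlt 1, hlt 0]
    · have hexn : ∀ i, i < n → ∀ p, p ∈ X → p ∈ Set.Ioo (a i) (b i) →
          f p ∉ Set.Ioo (a n) (b n) :=
        fun i hi p hpX hpI => hexIH i hi p hpX hpI n (by omega)
      rcases dich n hexn with h | h
      · exact h
      · exfalso
        obtain ⟨h0a, h0b⟩ := IH 0 (Nat.pos_of_ne_zero hn0)
        rcases horder 0 n (by omega) with h' | h'
        · have hthis := hne (a n) (haX n) (b 0) (hbX 0)
          rw [h.1, h0b] at hthis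
          rw [abs_of_pos (show (0:ℝ) < b n - b 0 by linarith [hlt n]),
            abs_of_pos (show (0:ℝ) < a n - b 0 by linarith)] at hthis
          linarith [hlt n]
        · have hthis := hne (b n) (hbX n) (a 0) (haX 0)
          rw [h.2, h0a] at hthis
          rw [abs_of_neg (show a n - a 0 < 0 by linarith [hlt n]),
            abs_of_neg (show b n - a 0 < 0 by linarith)] at hthis
          linarith [hlt n]
  -- conclusion : f is the identity on X
  have hfix : ∀ z, z ∈ X → f z = z := by
    intro z hz
    have hz' := hz
    rw [hX] at hz'
    obtain ⟨s, hs⟩ := Set.mem_iUnion.mp hz'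
    rcases hs with h | h
    · obtain ⟨-, hIcc⟩ := h
      obtain ⟨hsa, hsb⟩ := main s
      have h1 := hne z hz (a s) (haX s)
      rw [hsa] at h1
      have h2 := hne z hz (b s) (hbX s)
      rw [hsb] at h2
      have e1 : |z - a s| = z - a s := abs_of_nonneg (by linarith [hIcc.1])
      have e2 : |z - b s| = b s - z := by
        rw [abs_sub_comm]; exact abs_of_nonneg (by linarith [hIcc.2])
      rw [e1] at h1
      rw [e2] at h2
      obtain ⟨h1a, h1b⟩ := abs_sub_le_iff.mp h1
      obtain ⟨h2a, h2b⟩ := abs_sub_le_iff.mp h2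
      exact le_antisymm (by linarith) (by linarith)
    · obtain ⟨hz1, hz2⟩ := hA s h
      have h1 := hne z hz (b s) (hbX s)
      rw [(main s).2] at h1
      have h2 := hne z hz (a (m s)) (haX (m s))
      rw [(main (m s)).1] at h2
      have e1 : |z - b s| = z - b s := abs_of_pos (by linarith)
      have e2 : |z - a (m s)| = a (m s) - z := by
        rw [abs_sub_comm]; exact abs_of_pos (by linarith)
      rw [e1] at h1
      rw [e2] at h2
      obtain ⟨h1a, h1b⟩ := abs_sub_le_iff.mp h1
      obtain ⟨h2a, h2b⟩ := abs_sub_le_iff.mp h2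
      exact le_antisymm (by linarith) (by linarith)
  intro x hx y hy
  rw [hfix x hx, hfix y hy]
end

section
/- (Lemma 1) Let f : X → X be a non-expansive bijection and n ∈ ℕ. If f⁻¹(a′ n) ∈ [a′ n, b′ n] and f⁻¹(b′ n) ∈ [a′ n, b′ n], then {f⁻¹(a′ n), f⁻¹(b′ n)} = {a′ n, b′ n}. -/
theorem stmt4
    (a b : ℕ → ℝ)
    (hlt : ∀ n, a n < b n)
    (haq : ∀ n, ∃ q : ℚ, (q : ℝ) = a n)
    (hbq : ∀ n, ∃ q : ℚ, (q : ℝ) = b n)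
    (hdisj : ∀ i j, i ≠ j → Disjoint (Set.Icc (a i) (b i)) (Set.Icc (a j) (b j)))
    (hhalf : ∀ n, 2 * (b (n + 1) - a (n + 1)) < b n - a n)
    (hgap : ∀ i j, b i < a j → a j - b i > b 0 - a 0)
    (h01 : a 0 < a 1)
    (hcof : ∀ x : ℝ, ∃ k l, b k < x ∧ x < a l)
    (m : ℕ → ℕ)
    (hm : ∀ n, b n < a (m n))
    (hmgap : ∀ n, Disjoint (Set.Ioo (b n) (a (m n))) (⋃ k, Set.Icc (a k) (b k)))
    (A : ℕ → Set ℝ)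
    (hA : ∀ n, A n ⊆ Set.Ioo (b n) (a (m n)))
    (hAcard : ∀ n, ∀ U : Set ℝ, IsOpen U → U.Nonempty → U ⊆ Set.Ioo (b n) (a (m n)) →
      Cardinal.mk ↥(A n ∩ U) = Cardinal.aleph 1)
    (X : Set ℝ)
    (hX : X = ⋃ n, (({x : ℝ | ∃ q : ℚ, (q : ℝ) = x} ∩ Set.Icc (a n) (b n)) ∪ A n))
    (f : ℝ → ℝ)
    (hbij : Set.BijOn f X X)
    (hne : ∀ x ∈ X, ∀ y ∈ X, |f x - f y| ≤ |x - y|)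
    (g : ℝ → ℝ)
    (hg : Set.InvOn g f X X)
    (n : ℕ)
    (ha' : g (a n + (b (n + 1) - a (n + 1))) ∈
      Set.Icc (a n + (b (n + 1) - a (n + 1))) (b n - (b (n + 1) - a (n + 1))))
    (hb' : g (b n - (b (n + 1) - a (n + 1))) ∈
      Set.Icc (a n + (b (n + 1) - a (n + 1))) (b n - (b (n + 1) - a (n + 1)))) :
    ({g (a n + (b (n + 1) - a (n + 1))), g (b n - (b (n + 1) - a (n + 1)))} : Set ℝ) =
      {a n + (b (n + 1) - a (n + 1)), b n - (b (n + 1) - a (n + 1))} := by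
  set A' := a n + (b (n + 1) - a (n + 1)) with hA'def
  set B' := b n - (b (n + 1) - a (n + 1)) with hB'def
  have hδ : 0 < b (n + 1) - a (n + 1) := sub_pos.2 (hlt _)
  have h2 : 2 * (b (n + 1) - a (n + 1)) < b n - a n := hhalf n
  have hA'X : A' ∈ X := by
    rw [hX]
    refine Set.mem_iUnion.2 ⟨n, Or.inl ⟨?_, ?_, ?_⟩⟩
    · obtain ⟨qa, hqa⟩ := haq n
      obtain ⟨qb1, hqb1⟩ := hbq (n + 1)
      obtain ⟨qa1, hqa1⟩ := haq (n + 1)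
      exact ⟨qa + (qb1 - qa1), by push_cast; rw [hqa, hqb1, hqa1]⟩
    · linarith
    · linarith
  have hB'X : B' ∈ X := by
    rw [hX]
    refine Set.mem_iUnion.2 ⟨n, Or.inl ⟨?_, ?_, ?_⟩⟩
    · obtain ⟨qb, hqb⟩ := hbq n
      obtain ⟨qb1, hqb1⟩ := hbq (n + 1)
      obtain ⟨qa1, hqa1⟩ := haq (n + 1)
      exact ⟨qb - (qb1 - qa1), by push_cast; rw [hqb, hqb1, hqa1]⟩
    · linarith
    · linarith
  have hgAX : g A' ∈ X := by
    obtain ⟨x, hx, hfx⟩ := hbij.surjOn hA'X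
    have := hg.1 hx
    rw [hfx] at this
    rw [this]; exact hx
  have hgBX : g B' ∈ X := by
    obtain ⟨x, hx, hfx⟩ := hbij.surjOn hB'X
    have := hg.1 hx
    rw [hfx] at this
    rw [this]; exact hx
  have key := hne (g A') hgAX (g B') hgBX
  rw [hg.2 hA'X, hg.2 hB'X] at key
  obtain ⟨h1, h2'⟩ := ha'
  obtain ⟨h3, h4⟩ := hb'
  have habs : |A' - B'| = B' - A' := by rw [abs_sub_comm, abs_of_nonneg]; linarith
  rw [habs] at key
  have hcase : (g A' = A' ∧ g B' = B') ∨ (g A' = B' ∧ g B' = A') := by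
    rcases abs_cases (g A' - g B') with ⟨heq, _⟩ | ⟨heq, _⟩ <;> rw [heq] at key
    · right; constructor <;> linarith
    · left; constructor <;> linarith
  rcases hcase with ⟨e1, e2⟩ | ⟨e1, e2⟩
  · rw [e1, e2]
  · rw [e1, e2]; exact Set.pair_comm _ _
end

section
/- (Lemma 2, first case) Let f : X → X be a non-expansive bijection and n ∈ ℕ. If f(a′ n) = a′ n, then f(a n) = a n and f(b n) = b n. -/
theorem stmt5
    (a b : ℕ → ℝ)
    (hlt : ∀ n, a n < b n)
    (haq : ∀ n, ∃ q : ℚ, (q : ℝ) = a n)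
    (hbq : ∀ n, ∃ q : ℚ, (q : ℝ) = b n)
    (hdisj : ∀ i j, i ≠ j → Disjoint (Set.Icc (a i) (b i)) (Set.Icc (a j) (b j)))
    (hhalf : ∀ n, 2 * (b (n + 1) - a (n + 1)) < b n - a n)
    (hgap : ∀ i j, b i < a j → a j - b i > b 0 - a 0)
    (h01 : a 0 < a 1)
    (hcof : ∀ x : ℝ, ∃ k l, b k < x ∧ x < a l)
    (m : ℕ → ℕ)
    (hm : ∀ n, b n < a (m n))
    (hmgap : ∀ n, Disjoint (Set.Ioo (b n) (a (m n))) (⋃ k, Set.Icc (a k) (b k)))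
    (A : ℕ → Set ℝ)
    (hA : ∀ n, A n ⊆ Set.Ioo (b n) (a (m n)))
    (hAcard : ∀ n, ∀ U : Set ℝ, IsOpen U → U.Nonempty → U ⊆ Set.Ioo (b n) (a (m n)) →
      Cardinal.mk ↥(A n ∩ U) = Cardinal.aleph 1)
    (X : Set ℝ)
    (hX : X = ⋃ n, (({x : ℝ | ∃ q : ℚ, (q : ℝ) = x} ∩ Set.Icc (a n) (b n)) ∪ A n))
    (f : ℝ → ℝ)
    (hbij : Set.BijOn f X X)
    (hne : ∀ x ∈ X, ∀ y ∈ X, |f x - f y| ≤ |x - y|)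
    (n : ℕ)
    (hfa' : f (a n + (b (n + 1) - a (n + 1))) = a n + (b (n + 1) - a (n + 1))) :
    f (a n) = a n ∧ f (b n) = b n := by
  obtain ⟨qa, hqa⟩ := haq n
  obtain ⟨qb, hqb⟩ := hbq n
  obtain ⟨qa1, hqa1⟩ := haq (n + 1)
  obtain ⟨qb1, hqb1⟩ := hbq (n + 1)
  have hδ'pos : 0 < b (n + 1) - a (n + 1) := sub_pos.2 (hlt (n + 1))
  have h2δ : 2 * (b (n + 1) - a (n + 1)) < b n - a n := hhalf n
  have hδpos : 0 < b n - a n := by linarith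
  set a' := a n + (b (n + 1) - a (n + 1)) with ha'def
  -- memberships
  have hQmem : ∀ (k : ℕ) (x : ℝ), (∃ q : ℚ, (q : ℝ) = x) → x ∈ Set.Icc (a k) (b k) → x ∈ X := by
    intro k x hq hx
    rw [hX]
    exact Set.mem_iUnion.2 ⟨k, Or.inl ⟨hq, hx⟩⟩
  have hAmem : ∀ (k : ℕ) (x : ℝ), x ∈ A k → x ∈ X := by
    intro k x hx
    rw [hX]
    exact Set.mem_iUnion.2 ⟨k, Or.inr hx⟩
  have hanX : a n ∈ X := hQmem n _ ⟨qa, hqa⟩ ⟨le_refl _, (hlt n).le⟩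
  have hbnX : b n ∈ X := hQmem n _ ⟨qb, hqb⟩ ⟨(hlt n).le, le_refl _⟩
  have ha'X : a' ∈ X := by
    refine hQmem n a' ⟨qa + (qb1 - qa1), ?_⟩ ⟨by rw [ha'def]; linarith, by rw [ha'def]; linarith⟩
    rw [ha'def]
    push_cast
    rw [hqa, hqb1, hqa1]
  -- purity of the interval [a n, b n] : only rational points of X there
  have hpure : ∀ y ∈ X, y ∈ Set.Icc (a n) (b n) → ∃ q : ℚ, (q : ℝ) = y := by
    intro y hy hyI
    rw [hX] at hy
    rw [Set.mem_iUnion] at hy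
    obtain ⟨k, hk⟩ := hy
    rcases hk with h | h
    · exact h.1
    · exact absurd (Set.mem_iUnion.2 ⟨n, hyI⟩) (Set.disjoint_left.mp (hmgap k) (hA k h))
  -- key cardinality lemma
  have key : ∀ (j : ℕ) (U : Set ℝ), IsOpen U → U.Nonempty → U ⊆ Set.Ioo (b j) (a (m j)) →
      (∀ x ∈ A j ∩ U, f x ∈ Set.Ioo (a n) (b n)) → False := by
    intro j U hUo hUne hUsub hall
    have hsub : A j ∩ U ⊆ X := fun x hx => hAmem j x hx.1
    have himg : ∀ x, x ∈ A j ∩ U → f x ∈ {y : ℝ | ∃ q : ℚ, (q : ℝ) = y} := fun x hx =>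
      hpure (f x) (hbij.mapsTo (hsub hx)) ⟨(hall x hx).1.le, (hall x hx).2.le⟩
    have hQc : ({y : ℝ | ∃ q : ℚ, (q : ℝ) = y}).Countable := Set.countable_range ((↑) : ℚ → ℝ)
    have hf : Function.Injective
        (fun x : ↥(A j ∩ U) => (⟨f x.1, himg x.1 x.2⟩ : ↥{y : ℝ | ∃ q : ℚ, (q : ℝ) = y})) := by
      rintro ⟨x, hx⟩ ⟨y, hy⟩ hxy
      simp only [Subtype.mk.injEq] at hxy ⊢
      exact hbij.injOn (hsub hx) (hsub hy) hxy
    have hmk : Cardinal.mk ↥(A j ∩ U) ≤ Cardinal.aleph0 :=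
      le_trans (Cardinal.mk_le_of_injective hf) (Cardinal.mk_le_aleph0_iff.mpr hQc.to_subtype)
    rw [hAcard j U hUo hUne hUsub] at hmk
    exact absurd hmk (not_le.2 Cardinal.aleph0_lt_aleph_one)
  -- the gap immediately to the left of a n
  obtain ⟨k₀, l₀, hk₀, _⟩ := hcof (a n)
  have hδ0 : 0 < b 0 - a 0 := sub_pos.2 (hlt 0)
  have hsep : ∀ i j : ℕ, b i < b j → b 0 - a 0 < b j - b i := by
    intro i j hij
    have hne' : i ≠ j := by rintro rfl; exact lt_irrefl _ hij
    have haj : b i < a j := by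
      by_contra hcon
      push_neg at hcon
      exact Set.disjoint_left.mp (hdisj i j hne') ⟨(hlt i).le, le_refl _⟩ ⟨hcon, hij.le⟩
    have h1 := hgap i j haj
    have h2 := hlt j
    linarith
  set T := {x : ℝ | (∃ k, b k = x) ∧ b k₀ ≤ x ∧ x < a n} with hTdef
  have hTne : T.Nonempty := ⟨b k₀, ⟨k₀, rfl⟩, le_refl _, hk₀⟩
  have hTbdd : BddAbove T := ⟨a n, fun x hx => hx.2.2.le⟩
  obtain ⟨t, htT, hts⟩ := exists_lt_of_lt_csSup hTne (sub_lt_self (sSup T) hδ0)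
  obtain ⟨j, hj⟩ := htT.1
  have hts' : sSup T - (b 0 - a 0) < b j := by rw [hj]; exact hts
  have hjmax : ∀ x ∈ T, x ≤ b j := by
    intro x hx
    by_contra hcon
    push_neg at hcon
    obtain ⟨i, hbi⟩ := hx.1
    have h1 : b j < b i := by rw [hbi]; exact hcon
    have h2 := hsep j i h1
    have h3 : x ≤ sSup T := le_csSup hTbdd hx
    rw [← hbi] at h3
    linarith
  have hbj_lt : b j < a n := by rw [hj]; exact htT.2.2
  have hbj_ge : b k₀ ≤ b j := by rw [hj]; exact htT.2.1
  have hnoint : ∀ i, b j < a i → a i < a n → False := by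
    intro i hi1 hi2
    by_cases hbi : b i < a n
    · have hbigt : b j < b i := lt_trans hi1 (hlt i)
      have hmem : b i ∈ T := ⟨⟨i, rfl⟩, le_trans hbj_ge hbigt.le, hbi⟩
      exact absurd (hjmax _ hmem) (not_le.2 hbigt)
    · push_neg at hbi
      have hne' : i ≠ n := by rintro rfl; exact lt_irrefl _ hi2
      exact Set.disjoint_left.mp (hdisj i n hne') ⟨hi2.le, hbi⟩ ⟨le_refl _, (hlt n).le⟩
  have hamj : a (m j) = a n := by
    rcases lt_trichotomy (a (m j)) (a n) with hc | hc | hc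
    · exact (hnoint (m j) (hm j) hc).elim
    · exact hc
    · exact (Set.disjoint_left.mp (hmgap j) ⟨hbj_lt, hc⟩
        (Set.mem_iUnion.2 ⟨n, Set.mem_Icc.mpr ⟨le_refl _, (hlt n).le⟩⟩)).elim
  -- ball around a' for f (a n)
  have hball_a : |f (a n) - a'| ≤ b (n + 1) - a (n + 1) := by
    have h := hne (a n) hanX a' ha'X
    rw [hfa'] at h
    have heq : |a n - a'| = b (n + 1) - a (n + 1) := by
      rw [ha'def, show a n - (a n + (b (n + 1) - a (n + 1))) = -(b (n + 1) - a (n + 1)) from by ring,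
        abs_neg, abs_of_pos hδ'pos]
    rwa [heq] at h
  -- f (a n) = a n
  have hfan : f (a n) = a n := by
    by_contra hcon
    rw [abs_le] at hball_a
    have hge : a n ≤ f (a n) := by rw [ha'def] at hball_a; linarith [hball_a.1]
    have hlt2 : f (a n) < b n := by rw [ha'def] at hball_a; linarith [hball_a.2]
    have hgt : a n < f (a n) := lt_of_le_of_ne hge (Ne.symm hcon)
    obtain ⟨ε, hεpos, hεle1, hεle2⟩ : ∃ ε, 0 < ε ∧ ε ≤ f (a n) - a n ∧ ε ≤ b n - f (a n) :=
      ⟨min (f (a n) - a n) (b n - f (a n)), lt_min (by linarith) (by linarith),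
        min_le_left _ _, min_le_right _ _⟩
    obtain ⟨η, hηpos, hηle, hηle2⟩ : ∃ η, 0 < η ∧ η ≤ ε ∧ η ≤ a n - b j :=
      ⟨min ε (a n - b j), lt_min hεpos (by linarith), min_le_left _ _, min_le_right _ _⟩
    refine key j (Set.Ioo (a n - η) (a n)) isOpen_Ioo ⟨a n - η / 2, Set.mem_Ioo.mpr ⟨by linarith, by linarith⟩⟩
      ?_ ?_
    · intro x hx
      exact ⟨by linarith [hx.1], by rw [hamj]; exact hx.2⟩
    · intro x hx
      obtain ⟨hxA, hxU⟩ := hx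
      have hxX : x ∈ X := hAmem j x hxA
      have hd := hne x hxX (a n) hanX
      have hx1 : |x - a n| < η := by
        rw [abs_of_nonpos (by linarith [hxU.2] : x - a n ≤ 0)]
        linarith [hxU.1]
      have habs : |f x - f (a n)| < ε := lt_of_le_of_lt hd (by linarith)
      rw [abs_lt] at habs
      exact ⟨by linarith [habs.1], by linarith [habs.2]⟩
  -- the block [a n, a'] ∩ X is pointwise fixed
  have hblock : ∀ u, u ∈ X → a n ≤ u → u ≤ a' → f u = u := by
    intro u huX hu1 hu2
    have e1 := hne u huX (a n) hanX
    rw [hfan, abs_of_nonneg (sub_nonneg.2 hu1)] at e1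
    have e2 := hne u huX a' ha'X
    rw [hfa', abs_sub_comm u a', abs_of_nonneg (sub_nonneg.2 hu2)] at e2
    rw [abs_le] at e1 e2
    exact le_antisymm (by linarith [e1.2]) (by linarith [e2.1])
  -- values of points outside the block avoid the block
  have hnotblock : ∀ x, x ∈ X → a' < x → f x < a n ∨ a' < f x := by
    intro x hxX hx
    by_contra hcon
    push_neg at hcon
    have hfxX : f x ∈ X := hbij.mapsTo hxX
    have hfix : f (f x) = f x := hblock _ hfxX hcon.1 hcon.2
    have hxeq : x = f x := hbij.injOn hxX hfxX hfix.symm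
    linarith [hcon.2, hxeq ▸ hx]
  -- ball around a' for f (b n)
  have hball_b : |f (b n) - a'| ≤ (b n - a n) - (b (n + 1) - a (n + 1)) := by
    have h := hne (b n) hbnX a' ha'X
    rw [hfa'] at h
    have heq : |b n - a'| = (b n - a n) - (b (n + 1) - a (n + 1)) := by
      rw [ha'def, abs_of_nonneg (by linarith : (0:ℝ) ≤ b n - (a n + (b (n + 1) - a (n + 1))))]
      ring
    rwa [heq] at h
  -- f (b n) = b n
  have hfbn : f (b n) = b n := by
    by_contra hcb
    rw [abs_le] at hball_b
    have hle : f (b n) ≤ b n := by rw [ha'def] at hball_b; linarith [hball_b.2]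
    have ha'b : a' < b n := by rw [ha'def]; linarith
    have hclt : f (b n) < a n := by
      rcases hnotblock (b n) hbnX ha'b with hcase | hcase
      · exact hcase
      · exfalso
        have hltb : f (b n) < b n := lt_of_le_of_ne hle hcb
        have hagt : a n < f (b n) := by rw [ha'def] at hcase; linarith
        obtain ⟨ε, hεpos, hεle1, hεle2⟩ : ∃ ε, 0 < ε ∧ ε ≤ f (b n) - a n ∧ ε ≤ b n - f (b n) :=
          ⟨min (f (b n) - a n) (b n - f (b n)), lt_min (by linarith) (by linarith),
            min_le_left _ _, min_le_right _ _⟩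
        obtain ⟨η, hηpos, hηle, hηle2⟩ : ∃ η, 0 < η ∧ η ≤ ε ∧ η ≤ a (m n) - b n :=
          ⟨min ε (a (m n) - b n), lt_min hεpos (by linarith [hm n]),
            min_le_left _ _, min_le_right _ _⟩
        refine key n (Set.Ioo (b n) (b n + η)) isOpen_Ioo
          ⟨b n + η / 2, Set.mem_Ioo.mpr ⟨by linarith, by linarith⟩⟩ ?_ ?_
        · intro x hx
          exact ⟨hx.1, by linarith [hx.2]⟩
        · intro x hx
          obtain ⟨hxA, hxU⟩ := hx
          have hxX : x ∈ X := hAmem n x hxA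
          have hd := hne x hxX (b n) hbnX
          have hx1 : |x - b n| < η := by
            rw [abs_of_nonneg (by linarith [hxU.1] : (0:ℝ) ≤ x - b n)]
            linarith [hxU.2]
          have habs : |f x - f (b n)| < ε := lt_of_le_of_lt hd (by linarith)
          rw [abs_lt] at habs
          exact ⟨by linarith [habs.1], by linarith [habs.2]⟩
    -- the chain argument
    have hLpos : 0 < b n - a n - (3 / 2) * (b (n + 1) - a (n + 1)) := by linarith
    set K := ⌈(b n - a n - (3 / 2) * (b (n + 1) - a (n + 1))) / ((b (n + 1) - a (n + 1)) / 2)⌉₊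
      with hKdef
    have hKpos : 0 < K := by
      rw [hKdef]
      exact Nat.ceil_pos.2 (div_pos hLpos (by linarith))
    have hKR : (0:ℝ) < (K:ℝ) := by exact_mod_cast hKpos
    have hKle : (b n - a n - (3 / 2) * (b (n + 1) - a (n + 1))) / ((b (n + 1) - a (n + 1)) / 2)
        ≤ (K:ℝ) := by
      rw [hKdef]
      exact Nat.le_ceil _
    set st := (b n - a n - (3 / 2) * (b (n + 1) - a (n + 1))) / (K:ℝ) with hstdef
    have hstpos : 0 < st := div_pos hLpos hKR
    have hstle : st ≤ (b (n + 1) - a (n + 1)) / 2 := by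
      have h1 := (div_le_iff₀ (show (0:ℝ) < (b (n + 1) - a (n + 1)) / 2 by linarith)).mp hKle
      rw [hstdef, div_le_iff₀ hKR]
      linarith [mul_comm (K:ℝ) ((b (n + 1) - a (n + 1)) / 2)]
    have hKst : (K:ℝ) * st = b n - a n - (3 / 2) * (b (n + 1) - a (n + 1)) := by
      rw [hstdef]
      field_simp
    have huimem : ∀ i : ℕ, i ≤ K →
        (b n - (i:ℝ) * st) ∈ X ∧ a' + (b (n + 1) - a (n + 1)) / 2 ≤ b n - (i:ℝ) * st := by
      intro i hi
      have hile : (i:ℝ) ≤ (K:ℝ) := by exact_mod_cast hi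
      have hprod : (i:ℝ) * st ≤ (K:ℝ) * st := mul_le_mul_of_nonneg_right hile hstpos.le
      have hgeq : a' + (b (n + 1) - a (n + 1)) / 2 ≤ b n - (i:ℝ) * st := by
        rw [ha'def]; linarith [hKst]
      refine ⟨?_, hgeq⟩
      have hnneg : 0 ≤ (i:ℝ) * st := mul_nonneg (Nat.cast_nonneg _) hstpos.le
      refine hQmem n _ ⟨qb - (i:ℚ) * ((qb - qa - (3 / 2) * (qb1 - qa1)) / (K:ℚ)), ?_⟩
        ⟨by rw [ha'def] at hgeq; linarith, by linarith⟩
      rw [hstdef, ← hqa, ← hqb, ← hqa1, ← hqb1]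
      push_cast
      ring
    have hchain : ∀ i : ℕ, i ≤ K → f (b n - (i:ℝ) * st) < a n := by
      intro i
      induction i with
      | zero =>
        intro _
        simpa using hclt
      | succ i ih =>
        intro hik
        have hik' : i ≤ K := Nat.le_of_succ_le hik
        have hprev := ih hik'
        obtain ⟨huX1, hge1⟩ := huimem (i + 1) hik
        obtain ⟨huX0, hge0⟩ := huimem i hik'
        have hd := hne _ huX1 _ huX0
        have hdiff : |b n - ((i + 1 : ℕ):ℝ) * st - (b n - (i:ℝ) * st)| = st := by
          push_cast
          rw [show b n - ((i:ℝ) + 1) * st - (b n - (i:ℝ) * st) = -st from by ring,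
            abs_neg, abs_of_pos hstpos]
        rw [hdiff] at hd
        have ha'lt : a' < b n - ((i + 1 : ℕ):ℝ) * st := by linarith [hge1]
        rcases hnotblock _ huX1 ha'lt with hcase | hcase
        · exact hcase
        · exfalso
          rw [abs_le] at hd
          rw [ha'def] at hcase
          linarith [hd.2, hstle, hprev]
    have hfinK := hchain K le_rfl
    obtain ⟨huXK, hgeK⟩ := huimem K le_rfl
    have hd := hne _ huXK a' ha'X
    rw [hfa'] at hd
    have heqK : |b n - (K:ℝ) * st - a'| = (b (n + 1) - a (n + 1)) / 2 := by
      rw [hKst, ha'def,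
        show b n - (b n - a n - 3 / 2 * (b (n + 1) - a (n + 1)))
          - (a n + (b (n + 1) - a (n + 1))) = (b (n + 1) - a (n + 1)) / 2 from by ring,
        abs_of_pos (by linarith)]
    rw [heqK, abs_le] at hd
    rw [ha'def] at hd
    linarith [hd.1, hfinK]
  exact ⟨hfan, hfbn⟩
end

section
/- (Lemma 2, second case) Let f : X → X be a non-expansive bijection and n ∈ ℕ. If f(a′ n) = b′ n, then f(a n) = b n and f(b n) = a n. -/
theorem stmt6
    (a b : ℕ → ℝ)
    (hlt : ∀ n, a n < b n)
    (haq : ∀ n, ∃ q : ℚ, (q : ℝ) = a n)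
    (hbq : ∀ n, ∃ q : ℚ, (q : ℝ) = b n)
    (hdisj : ∀ i j, i ≠ j → Disjoint (Set.Icc (a i) (b i)) (Set.Icc (a j) (b j)))
    (hhalf : ∀ n, 2 * (b (n + 1) - a (n + 1)) < b n - a n)
    (hgap : ∀ i j, b i < a j → a j - b i > b 0 - a 0)
    (h01 : a 0 < a 1)
    (hcof : ∀ x : ℝ, ∃ k l, b k < x ∧ x < a l)
    (m : ℕ → ℕ)
    (hm : ∀ n, b n < a (m n))
    (hmgap : ∀ n, Disjoint (Set.Ioo (b n) (a (m n))) (⋃ k, Set.Icc (a k) (b k)))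
    (A : ℕ → Set ℝ)
    (hA : ∀ n, A n ⊆ Set.Ioo (b n) (a (m n)))
    (hAcard : ∀ n, ∀ U : Set ℝ, IsOpen U → U.Nonempty → U ⊆ Set.Ioo (b n) (a (m n)) →
      Cardinal.mk ↥(A n ∩ U) = Cardinal.aleph 1)
    (X : Set ℝ)
    (hX : X = ⋃ n, (({x : ℝ | ∃ q : ℚ, (q : ℝ) = x} ∩ Set.Icc (a n) (b n)) ∪ A n))
    (f : ℝ → ℝ)
    (hbij : Set.BijOn f X X)
    (hne : ∀ x ∈ X, ∀ y ∈ X, |f x - f y| ≤ |x - y|)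
    (n : ℕ)
    (hfa' : f (a n + (b (n + 1) - a (n + 1))) = b n - (b (n + 1) - a (n + 1))) :
    f (a n) = b n ∧ f (b n) = a n := by
  classical
  obtain ⟨qa, hqa⟩ := haq n
  obtain ⟨qb, hqb⟩ := hbq n
  obtain ⟨qa1, hqa1⟩ := haq (n + 1)
  obtain ⟨qb1, hqb1⟩ := hbq (n + 1)
  obtain ⟨δ, hδdef⟩ : ∃ d : ℝ, d = b (n + 1) - a (n + 1) := ⟨_, rfl⟩
  rw [← hδdef] at hfa'
  have hab : a n < b n := hlt n
  have hδpos : 0 < δ := by rw [hδdef]; exact sub_pos.2 (hlt (n + 1))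
  have hLδ : 2 * δ < b n - a n := by rw [hδdef]; exact hhalf n
  have hδq : ((qb1 - qa1 : ℚ) : ℝ) = δ := by rw [hδdef]; push_cast; rw [hqb1, hqa1]
  -- membership in X
  have hQmem : ∀ x : ℝ, (∃ q : ℚ, (q : ℝ) = x) → a n ≤ x → x ≤ b n → x ∈ X := by
    intro x hq h1 h2
    rw [hX]
    exact Set.mem_iUnion.2 ⟨n, Or.inl ⟨hq, h1, h2⟩⟩
  have hAX : ∀ j : ℕ, A j ⊆ X := by
    intro j x hx
    rw [hX]; exact Set.mem_iUnion.2 ⟨j, Or.inr hx⟩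
  have haX : a n ∈ X := hQmem _ ⟨qa, hqa⟩ le_rfl hab.le
  have hbX : b n ∈ X := hQmem _ ⟨qb, hqb⟩ hab.le le_rfl
  have hqa' : ((qa + (qb1 - qa1) : ℚ) : ℝ) = a n + δ := by
    push_cast; rw [hqa, hδdef, hqb1, hqa1]
  have ha'X : a n + δ ∈ X := hQmem _ ⟨_, hqa'⟩ (by linarith) (by linarith)
  -- elements of X inside [a n, b n] are rational
  have hratX : ∀ x, x ∈ X → a n ≤ x → x ≤ b n → ∃ q : ℚ, (q : ℝ) = x := by
    intro x hx h1 h2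
    rw [hX] at hx
    obtain ⟨j, hj⟩ := Set.mem_iUnion.1 hx
    rcases hj with hj | hj
    · exact hj.1
    · exfalso
      have hx2 : x ∈ ⋃ k, Set.Icc (a k) (b k) := Set.mem_iUnion.2 ⟨n, Set.mem_Icc.2 ⟨h1, h2⟩⟩
      exact Set.disjoint_left.1 (hmgap j) (hA j hj) hx2
  have hXcnt : (X ∩ Set.Ioo (a n) (b n)).Countable := by
    refine Set.Countable.mono ?_ (Set.countable_range ((↑) : ℚ → ℝ))
    rintro x ⟨hx, h1, h2⟩
    obtain ⟨q, hq⟩ := hratX x hx h1.le h2.le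
    exact ⟨q, hq⟩
  -- uncountability transfer: images of a gap sliver cluster near f t
  have huncGen : ∀ (j : ℕ) (t : ℝ), t ∈ X → ∀ c d ε : ℝ, c < d →
      Set.Ioo c d ⊆ Set.Ioo (b j) (a (m j)) → (∀ x ∈ Set.Ioo c d, |x - t| < ε) →
      ¬ (X ∩ Set.Ioo (f t - ε) (f t + ε)).Countable := by
    intro j t ht c d ε hcd hsub hdist hcnt
    have hU := hAcard j _ isOpen_Ioo (Set.nonempty_Ioo.2 hcd) hsub
    have hsubX : A j ∩ Set.Ioo c d ⊆ X := fun x hx => hAX j hx.1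
    have himg : f '' (A j ∩ Set.Ioo c d) ⊆ X ∩ Set.Ioo (f t - ε) (f t + ε) := by
      rintro y ⟨x, hx, rfl⟩
      have h3 : |f x - f t| < ε := lt_of_le_of_lt (hne x (hsubX hx) t ht) (hdist x hx.2)
      have h4 := abs_lt.1 h3
      exact ⟨hbij.mapsTo (hsubX hx), by constructor <;> linarith [h4.1, h4.2]⟩
    have hinj : Set.InjOn f (A j ∩ Set.Ioo c d) := hbij.injOn.mono hsubX
    have hmk : (Cardinal.mk (f '' (A j ∩ Set.Ioo c d) : Set ℝ)) = Cardinal.aleph 1 := by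
      rw [Cardinal.mk_image_eq_of_injOn f _ hinj]; exact hU
    have hle : (Cardinal.mk (f '' (A j ∩ Set.Ioo c d) : Set ℝ)) ≤ Cardinal.aleph0 :=
      (Cardinal.le_aleph0_iff_set_countable).2 (Set.Countable.mono himg hcnt)
    rw [hmk] at hle
    exact absurd hle (not_le.2 Cardinal.aleph0_lt_aleph_one)
  -- the gap adjacent to a n on the left
  have hδ0pos : 0 < b 0 - a 0 := sub_pos.2 (hlt 0)
  obtain ⟨k0, l0, hk0, _⟩ := hcof (a n)
  have hTne : ({t : ℝ | (∃ k, b k = t) ∧ t < a n}).Nonempty := ⟨b k0, ⟨k0, rfl⟩, hk0⟩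
  have hTbdd : BddAbove {t : ℝ | (∃ k, b k = t) ∧ t < a n} := ⟨a n, fun t ht => ht.2.le⟩
  obtain ⟨t0, ht0T, ht0gt⟩ := exists_lt_of_lt_csSup hTne
    (show sSup {t : ℝ | (∃ k, b k = t) ∧ t < a n} - (b 0 - a 0)
      < sSup {t : ℝ | (∃ k, b k = t) ∧ t < a n} by linarith)
  obtain ⟨kstar, hkstar⟩ := ht0T.1
  have hbklt : b kstar < a n := by rw [hkstar]; exact ht0T.2
  have hmaxT : ∀ k : ℕ, b k < a n → b k ≤ b kstar := by
    intro k hklt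
    by_contra hgt
    push_neg at hgt
    have hkk : k ≠ kstar := by intro h; rw [h] at hgt; exact lt_irrefl _ hgt
    have hak : b kstar < a k := by
      by_contra hle
      push_neg at hle
      exact Set.disjoint_left.1 (hdisj k kstar hkk)
        (Set.mem_Icc.2 ⟨hle, hgt.le⟩) (Set.mem_Icc.2 ⟨(hlt kstar).le, le_rfl⟩)
    have hsep := hgap kstar k hak
    have h1 : b k ≤ sSup {t : ℝ | (∃ k, b k = t) ∧ t < a n} := le_csSup hTbdd ⟨⟨k, rfl⟩, hklt⟩
    have h2 : sSup {t : ℝ | (∃ k, b k = t) ∧ t < a n} - (b 0 - a 0) < b kstar := by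
      rw [hkstar]; exact ht0gt
    linarith [hlt k]
  have hadj : a (m kstar) = a n := by
    have hle1 : a (m kstar) ≤ a n := by
      by_contra hgt
      push_neg at hgt
      exact Set.disjoint_left.1 (hmgap kstar) (Set.mem_Ioo.2 ⟨hbklt, hgt⟩)
        (Set.mem_iUnion.2 ⟨n, Set.mem_Icc.2 ⟨le_rfl, hab.le⟩⟩)
    rcases eq_or_lt_of_le hle1 with h | h
    · exact h
    · exfalso
      have hmn : m kstar ≠ n := fun hh => by rw [hh] at h; exact lt_irrefl _ h
      have hbm : b (m kstar) < a n := by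
        by_contra hle
        push_neg at hle
        exact Set.disjoint_left.1 (hdisj (m kstar) n hmn)
          (Set.mem_Icc.2 ⟨h.le, hle⟩) (Set.mem_Icc.2 ⟨le_rfl, hab.le⟩)
      have := hmaxT (m kstar) hbm
      have h2 := hm kstar
      linarith [hlt (m kstar)]
  -- Step 1 : f (a n) = b n
  have hwin : |f (a n) - (b n - δ)| ≤ δ := by
    have h := hne (a n) haX (a n + δ) ha'X
    rw [hfa'] at h
    calc |f (a n) - (b n - δ)| ≤ |a n - (a n + δ)| := h
      _ = δ := by
          rw [show a n - (a n + δ) = -δ by ring, abs_neg, abs_of_nonneg hδpos.le]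
  have hfa : f (a n) = b n := by
    have h1 := abs_le.1 hwin
    by_contra hne'
    have hult : f (a n) < b n := lt_of_le_of_ne (by linarith [h1.2]) hne'
    have hugt : a n < f (a n) := by linarith [h1.1]
    have hεpos : 0 < min (b n - f (a n)) (f (a n) - a n) :=
      lt_min (by linarith) (by linarith)
    have hmaxlt : max (b kstar) (a n - min (b n - f (a n)) (f (a n) - a n)) < a n :=
      max_lt hbklt (by linarith)
    refine huncGen kstar (a n) haX (max (b kstar) (a n - min (b n - f (a n)) (f (a n) - a n)))
      (a n) (min (b n - f (a n)) (f (a n) - a n)) hmaxlt ?_ ?_ ?_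
    · intro x hx
      rw [Set.mem_Ioo, hadj]
      exact ⟨lt_of_le_of_lt (le_max_left _ _) hx.1, hx.2⟩
    · intro x hx
      have h5 : a n - min (b n - f (a n)) (f (a n) - a n) < x :=
        lt_of_le_of_lt (le_max_right _ _) hx.1
      rw [abs_of_nonpos (by linarith [hx.2] : x - a n ≤ 0)]
      linarith [hx.2]
    · refine Set.Countable.mono ?_ hXcnt
      rintro x ⟨hx1, hx2, hx3⟩
      have h5 : min (b n - f (a n)) (f (a n) - a n) ≤ f (a n) - a n := min_le_right _ _
      have h6 : min (b n - f (a n)) (f (a n) - a n) ≤ b n - f (a n) := min_le_left _ _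
      exact ⟨hx1, by constructor <;> linarith⟩
  -- Step 2 : exact reflection on [a n, a n + δ]
  have hrefl : ∀ w, w ∈ X → a n ≤ w → w ≤ a n + δ → f w = a n + b n - w := by
    intro w hw h1 h2
    have e1 := hne w hw (a n) haX
    rw [hfa] at e1
    have e2 := hne w hw (a n + δ) ha'X
    rw [hfa'] at e2
    have e1' : |f w - b n| ≤ w - a n := by
      rwa [abs_of_nonneg (by linarith : (0:ℝ) ≤ w - a n)] at e1
    have e2' : |f w - (b n - δ)| ≤ a n + δ - w := by
      rwa [abs_of_nonpos (by linarith : w - (a n + δ) ≤ 0), neg_sub] at e2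
    have p1 := (abs_le.1 e1').1
    have p2 := (abs_le.1 e2').2
    linarith
  -- Step 3 : points with value in [b n - δ, b n] lie in [a n, a n + δ]
  have hres : ∀ y, y ∈ X → b n - δ ≤ f y → f y ≤ b n → y ≤ a n + δ := by
    intro y hy h1 h2
    have hfyX : f y ∈ X := hbij.mapsTo hy
    obtain ⟨qr, hqr⟩ := hratX (f y) hfyX (by linarith) h2
    have hwq : ∃ q : ℚ, (q : ℝ) = a n + b n - f y :=
      ⟨qa + qb - qr, by push_cast; rw [hqa, hqb, hqr]⟩
    have hwX : a n + b n - f y ∈ X := hQmem _ hwq (by linarith) (by linarith)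
    have hfw : f (a n + b n - f y) = f y := by
      rw [hrefl _ hwX (by linarith) (by linarith)]; ring
    have hyw := hbij.injOn hwX hy hfw
    linarith [hyw]
  -- Step 4 : interior points above a n + δ map strictly below b n - δ
  have hC : ∀ x, x ∈ X → a n + δ < x → x < b n → f x < b n - δ := by
    intro x hxX hx1 hx2
    by_contra hge
    push_neg at hge
    have hfxgt : b n < f x := by
      rcases lt_or_ge (b n) (f x) with h | h
      · exact h
      · exact absurd (hres x hxX hge h) (not_le.2 hx1)
    obtain ⟨qx, hqx⟩ := hratX x hxX (by linarith) hx2.le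
    obtain ⟨s, hsdef⟩ : ∃ s : ℝ, s = min δ (x - (a n + δ)) / 2 := ⟨_, rfl⟩
    have hspos : 0 < s := by
      rw [hsdef]; exact div_pos (lt_min hδpos (by linarith)) two_pos
    have hsle : s ≤ δ / 2 := by
      rw [hsdef]
      have := min_le_left δ (x - (a n + δ))
      linarith
    have hsltx : a n + δ + s < x := by
      have h7 : s ≤ (x - (a n + δ)) / 2 := by
        rw [hsdef]
        have := min_le_right δ (x - (a n + δ))
        linarith
      linarith
    obtain ⟨qs, hqs⟩ : ∃ q : ℚ, (q : ℝ) = s := by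
      refine ⟨min (qb1 - qa1) (qx - (qa + (qb1 - qa1))) / 2, ?_⟩
      rw [hsdef]
      push_cast
      rw [hqb1, hqa1, hqx, hqa, ← hδdef]
    obtain ⟨x1, hx1def⟩ : ∃ y : ℝ, y = a n + δ + s := ⟨_, rfl⟩
    obtain ⟨q1, hq1⟩ : ∃ q : ℚ, (q : ℝ) = x1 := by
      refine ⟨qa + (qb1 - qa1) + qs, ?_⟩
      rw [hx1def]
      push_cast
      rw [hqa, hqb1, hqa1, hqs, ← hδdef]
    have hx1a : a n + δ < x1 := by rw [hx1def]; linarith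
    have hx1b : x1 < x := by rw [hx1def]; linarith
    have hx1X : x1 ∈ X := hQmem _ ⟨_, hq1⟩ (by linarith) (by linarith)
    have hstart : f x1 < b n - δ := by
      have e := hne x1 hx1X (a n + δ) ha'X
      rw [hfa'] at e
      have e' : |f x1 - (b n - δ)| ≤ s := by
        calc |f x1 - (b n - δ)| ≤ |x1 - (a n + δ)| := e
          _ = s := by rw [hx1def, show a n + δ + s - (a n + δ) = s by ring,
                abs_of_nonneg hspos.le]
      have p2 := (abs_le.1 e').2
      rcases lt_or_ge (f x1) (b n - δ) with h | h
      · exact h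
      · exfalso
        have := hres _ hx1X h (by linarith)
        linarith
    obtain ⟨N0, hN0⟩ := exists_nat_gt ((x - x1) / (δ / 2))
    have hN0nonneg : (0:ℝ) ≤ (N0:ℝ) := Nat.cast_nonneg _
    have hNpos : (0:ℝ) < (N0:ℝ) + 1 := by linarith
    obtain ⟨st, hstdef⟩ : ∃ y : ℝ, y = (x - x1) / ((N0:ℝ) + 1) := ⟨_, rfl⟩
    have hstpos : 0 < st := by rw [hstdef]; exact div_pos (by linarith) hNpos
    have hstlt : st < δ / 2 := by
      rw [hstdef, div_lt_iff₀ hNpos]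
      have hhalfpos : (0:ℝ) < δ / 2 := by linarith
      have h8 : x - x1 < (N0:ℝ) * (δ / 2) := by
        have h8' := (div_lt_iff₀ hhalfpos).1 hN0
        linarith
      have h9 : δ / 2 * ((N0:ℝ) + 1) = (N0:ℝ) * (δ / 2) + δ / 2 := by ring
      linarith
    obtain ⟨qst, hqst⟩ : ∃ q : ℚ, (q : ℝ) = st := by
      refine ⟨(qx - q1) / ((N0:ℚ) + 1), ?_⟩
      rw [hstdef]
      push_cast
      rw [hqx, hq1]
    have hNsum : ((N0:ℝ) + 1) * st = x - x1 := by
      rw [hstdef]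
      field_simp
    have hgmem : ∀ k : ℕ, k ≤ N0 + 1 →
        (x1 + (k:ℝ) * st ∈ X ∧ a n + δ < x1 + (k:ℝ) * st ∧ x1 + (k:ℝ) * st ≤ x) := by
      intro k hk
      have hk1 : (0:ℝ) ≤ (k:ℝ) * st := by positivity
      have hkle : (k:ℝ) ≤ (N0:ℝ) + 1 := by exact_mod_cast hk
      have hk2 : (k:ℝ) * st ≤ x - x1 := by
        calc (k:ℝ) * st ≤ ((N0:ℝ) + 1) * st := mul_le_mul_of_nonneg_right hkle hstpos.le
          _ = x - x1 := hNsum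
      refine ⟨?_, by linarith, by linarith⟩
      have hqk : ∃ q : ℚ, (q : ℝ) = x1 + (k:ℝ) * st := by
        refine ⟨q1 + (k:ℚ) * qst, ?_⟩
        push_cast
        rw [hq1, hqst]
      exact hQmem _ hqk (by linarith) (by linarith)
    have key : ∀ k : ℕ, k ≤ N0 + 1 → f (x1 + (k:ℝ) * st) < b n - δ := by
      intro k
      induction k with
      | zero =>
        intro _
        simpa using hstart
      | succ k ih =>
        intro hk
        have hk' : k ≤ N0 + 1 := Nat.le_of_succ_le hk
        have ihk := ih hk'
        obtain ⟨hmem1, hlo1, hhi1⟩ := hgmem k hk'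
        obtain ⟨hmem2, hlo2, hhi2⟩ := hgmem (k + 1) hk
        have e := hne _ hmem2 _ hmem1
        have hdiff : (x1 + ((k:ℕ) + 1 : ℕ) * st) - (x1 + (k:ℝ) * st) = st := by
          push_cast
          ring
        have e' : |f (x1 + ((k + 1 : ℕ):ℝ) * st) - f (x1 + (k:ℝ) * st)| ≤ st := by
          calc |f (x1 + ((k + 1 : ℕ):ℝ) * st) - f (x1 + (k:ℝ) * st)|
              ≤ |(x1 + ((k + 1 : ℕ):ℝ) * st) - (x1 + (k:ℝ) * st)| := e
            _ = st := by
                rw [show (x1 + ((k + 1 : ℕ):ℝ) * st) - (x1 + (k:ℝ) * st) = st by push_cast; ring,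
                  abs_of_nonneg hstpos.le]
        have p2 := (abs_le.1 e').2
        have hfub : f (x1 + ((k + 1 : ℕ):ℝ) * st) < b n := by linarith
        rcases lt_or_ge (f (x1 + ((k + 1 : ℕ):ℝ) * st)) (b n - δ) with h | h
        · exact h
        · exfalso
          have := hres _ hmem2 h hfub.le
          linarith
    have hfinal := key (N0 + 1) le_rfl
    have hgN : x1 + ((N0 + 1 : ℕ):ℝ) * st = x := by
      push_cast
      linarith [hNsum]
    rw [hgN] at hfinal
    linarith
  -- Step 5 : f (b n) ∈ [a n, b n - δ]
  have hvge : a n ≤ f (b n) := by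
    have e := hne (b n) hbX (a n + δ) ha'X
    rw [hfa'] at e
    have e' : |f (b n) - (b n - δ)| ≤ b n - (a n + δ) := by
      rwa [abs_of_nonneg (by linarith : (0:ℝ) ≤ b n - (a n + δ))] at e
    linarith [(abs_le.1 e').1]
  have hvle : f (b n) ≤ b n - δ := by
    refine le_of_forall_pos_le_add ?_
    intro ε hε
    obtain ⟨N0, hN0⟩ := exists_nat_gt ((b n - (a n + δ)) / ε)
    have hNpos : (0:ℝ) < ((N0 + 2 : ℕ) : ℝ) := by positivity
    have hNge2 : (2:ℝ) ≤ ((N0 + 2 : ℕ) : ℝ) := by push_cast; linarith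
    obtain ⟨y, hydef⟩ : ∃ y : ℝ, y = b n - (b n - (a n + δ)) / ((N0 + 2 : ℕ) : ℝ) := ⟨_, rfl⟩
    have hq_y : ∃ q : ℚ, (q : ℝ) = y := by
      refine ⟨qb - (qb - (qa + (qb1 - qa1))) / ((N0 + 2 : ℕ) : ℚ), ?_⟩
      rw [hydef]
      push_cast
      rw [hqb]
      have hcast : ((qa : ℝ) + ((qb1 : ℝ) - (qa1 : ℝ))) = a n + δ := by
        push_cast at hqa' ⊢; exact hqa'
      rw [hcast]
    have hfrac_pos : 0 < (b n - (a n + δ)) / ((N0 + 2 : ℕ) : ℝ) :=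
      div_pos (by linarith) hNpos
    have hfrac_lt : (b n - (a n + δ)) / ((N0 + 2 : ℕ) : ℝ) < b n - (a n + δ) := by
      rw [div_lt_iff₀ hNpos]
      have h3 : (b n - (a n + δ)) * 2 ≤ (b n - (a n + δ)) * ((N0 + 2 : ℕ) : ℝ) :=
        mul_le_mul_of_nonneg_left hNge2 (by linarith)
      linarith
    have hfrac_lt_eps : (b n - (a n + δ)) / ((N0 + 2 : ℕ) : ℝ) < ε := by
      rw [div_lt_iff₀ hNpos]
      have h1 := (div_lt_iff₀ hε).1 hN0
      have h3 : ε * ((N0 + 2 : ℕ) : ℝ) = (N0 : ℝ) * ε + 2 * ε := by push_cast; ring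
      linarith
    have hy1 : a n + δ < y := by rw [hydef]; linarith
    have hy2 : y < b n := by rw [hydef]; linarith
    have hyX : y ∈ X := hQmem _ hq_y (by linarith) hy2.le
    have hfy := hC y hyX hy1 hy2
    have e := hne (b n) hbX y hyX
    have e' : |f (b n) - f y| ≤ (b n - (a n + δ)) / ((N0 + 2 : ℕ) : ℝ) := by
      calc |f (b n) - f y| ≤ |b n - y| := e
        _ = (b n - (a n + δ)) / ((N0 + 2 : ℕ) : ℝ) := by
          rw [hydef, abs_of_nonneg (by linarith)]
          ring
    have p2 := (abs_le.1 e').2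
    linarith [hfrac_lt_eps]
  -- Step 6 : f (b n) = a n
  have hfb : f (b n) = a n := by
    by_contra hvne
    have hvgt : a n < f (b n) := lt_of_le_of_ne hvge (Ne.symm hvne)
    have hεpos : 0 < min (f (b n) - a n) (b n - f (b n)) :=
      lt_min (by linarith) (by linarith)
    have hlt2 : b n < min (a (m n)) (b n + min (f (b n) - a n) (b n - f (b n))) :=
      lt_min (hm n) (by linarith)
    refine huncGen n (b n) hbX (b n) (min (a (m n)) (b n + min (f (b n) - a n) (b n - f (b n))))
      (min (f (b n) - a n) (b n - f (b n))) hlt2 ?_ ?_ ?_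
    · intro x hx
      exact Set.mem_Ioo.2 ⟨hx.1, lt_of_lt_of_le hx.2 (min_le_left _ _)⟩
    · intro x hx
      rw [abs_of_nonneg (by linarith [hx.1] : (0:ℝ) ≤ x - b n)]
      have := lt_of_lt_of_le hx.2 (min_le_right _ _)
      linarith
    · refine Set.Countable.mono ?_ hXcnt
      rintro x ⟨hx1, hx2, hx3⟩
      have h5 : min (f (b n) - a n) (b n - f (b n)) ≤ f (b n) - a n := min_le_left _ _
      have h6 : min (f (b n) - a n) (b n - f (b n)) ≤ b n - f (b n) := min_le_right _ _
      exact ⟨hx1, by constructor <;> linarith⟩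
  exact ⟨hfa, hfb⟩
end

section
/- (Lemma 3) Let f : X → X be a non-expansive bijection and n ∈ ℕ. If {f(a n), f(b n)} = {a n, b n}, then the restriction of f to [a n, b n] ∩ X is an isometry of [a n, b n] ∩ X onto [a n, b n] ∩ X; more precisely, either f(t) = t for every t ∈ [a n, b n] ∩ X (when f(a n) = a n), or f(t) = a n + b n − t for every t ∈ [a n, b n] ∩ X (when f(a n) = b n). -/
theorem stmt7
    (a b : ℕ → ℝ)
    (hlt : ∀ n, a n < b n)
    (haq : ∀ n, ∃ q : ℚ, (q : ℝ) = a n)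
    (hbq : ∀ n, ∃ q : ℚ, (q : ℝ) = b n)
    (hdisj : ∀ i j, i ≠ j → Disjoint (Set.Icc (a i) (b i)) (Set.Icc (a j) (b j)))
    (hhalf : ∀ n, 2 * (b (n + 1) - a (n + 1)) < b n - a n)
    (hgap : ∀ i j, b i < a j → a j - b i > b 0 - a 0)
    (h01 : a 0 < a 1)
    (hcof : ∀ x : ℝ, ∃ k l, b k < x ∧ x < a l)
    (m : ℕ → ℕ)
    (hm : ∀ n, b n < a (m n))
    (hmgap : ∀ n, Disjoint (Set.Ioo (b n) (a (m n))) (⋃ k, Set.Icc (a k) (b k)))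
    (A : ℕ → Set ℝ)
    (hA : ∀ n, A n ⊆ Set.Ioo (b n) (a (m n)))
    (hAcard : ∀ n, ∀ U : Set ℝ, IsOpen U → U.Nonempty → U ⊆ Set.Ioo (b n) (a (m n)) →
      Cardinal.mk ↥(A n ∩ U) = Cardinal.aleph 1)
    (X : Set ℝ)
    (hX : X = ⋃ n, (({x : ℝ | ∃ q : ℚ, (q : ℝ) = x} ∩ Set.Icc (a n) (b n)) ∪ A n))
    (f : ℝ → ℝ)
    (hbij : Set.BijOn f X X)
    (hne : ∀ x ∈ X, ∀ y ∈ X, |f x - f y| ≤ |x - y|)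
    (n : ℕ)
    (hend : ({f (a n), f (b n)} : Set ℝ) = {a n, b n}) :
    (Set.BijOn f (Set.Icc (a n) (b n) ∩ X) (Set.Icc (a n) (b n) ∩ X) ∧
      ∀ x ∈ Set.Icc (a n) (b n) ∩ X, ∀ y ∈ Set.Icc (a n) (b n) ∩ X,
        |f x - f y| = |x - y|) ∧
    ((f (a n) = a n ∧ ∀ t ∈ Set.Icc (a n) (b n) ∩ X, f t = t) ∨
     (f (a n) = b n ∧ ∀ t ∈ Set.Icc (a n) (b n) ∩ X, f t = a n + b n - t)) := by
  have hab := hlt n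
  -- a n and b n belong to X
  have haX : a n ∈ X := by
    rw [hX]
    exact Set.mem_iUnion.2 ⟨n, Or.inl ⟨haq n, le_refl _, le_of_lt hab⟩⟩
  have hbX : b n ∈ X := by
    rw [hX]
    exact Set.mem_iUnion.2 ⟨n, Or.inl ⟨hbq n, le_of_lt hab, le_refl _⟩⟩
  -- elements of [a n, b n] ∩ X are rational
  have hrat : ∀ x ∈ Set.Icc (a n) (b n) ∩ X, ∃ q : ℚ, (q : ℝ) = x := by
    rintro x ⟨hxI, hxX⟩
    rw [hX] at hxX
    rcases Set.mem_iUnion.1 hxX with ⟨k, hk⟩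
    rcases hk with ⟨hq, _⟩ | hAk
    · exact hq
    · exact absurd (Set.mem_iUnion.2 ⟨n, hxI⟩)
        (Set.disjoint_left.1 (hmgap k) (hA k hAk))
  -- the reflection preserves [a n, b n] ∩ X
  have hrefl : ∀ x ∈ Set.Icc (a n) (b n) ∩ X,
      a n + b n - x ∈ Set.Icc (a n) (b n) ∩ X := by
    intro x hx
    obtain ⟨hxI, _⟩ := id hx
    obtain ⟨qa, hqa⟩ := haq n
    obtain ⟨qb, hqb⟩ := hbq n
    obtain ⟨qx, hqx⟩ := hrat x hx
    have hI : a n + b n - x ∈ Set.Icc (a n) (b n) := by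
      constructor <;> [linarith [hxI.2]; linarith [hxI.1]]
    refine ⟨hI, ?_⟩
    rw [hX]
    refine Set.mem_iUnion.2 ⟨n, Or.inl ⟨⟨qa + qb - qx, ?_⟩, hI⟩⟩
    push_cast
    rw [hqa, hqb, hqx]
  -- the endpoint case split
  have hfa : f (a n) ∈ ({a n, b n} : Set ℝ) := by
    rw [← hend]; exact Set.mem_insert _ _
  have hfb : f (b n) ∈ ({a n, b n} : Set ℝ) := by
    rw [← hend]; exact Set.mem_insert_iff.2 (Or.inr rfl)
  have hcase : (f (a n) = a n ∧ f (b n) = b n) ∨ (f (a n) = b n ∧ f (b n) = a n) := by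
    have hbmem : b n ∈ ({f (a n), f (b n)} : Set ℝ) := by
      rw [hend]; exact Set.mem_insert_iff.2 (Or.inr rfl)
    have hamem : a n ∈ ({f (a n), f (b n)} : Set ℝ) := by
      rw [hend]; exact Set.mem_insert _ _
    rcases hfa with h1 | h1
    · left
      refine ⟨h1, ?_⟩
      rcases hbmem with h2 | h2
      · exact absurd (h1 ▸ h2.symm) (ne_of_lt hab)
      · exact h2.symm
    · right
      refine ⟨h1, ?_⟩
      rcases hamem with h2 | h2
      · exact absurd (h1 ▸ h2.symm) (ne_of_gt hab)
      · exact h2.symm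
  -- key equalities for t in the interval
  have hkey : ∀ t ∈ Set.Icc (a n) (b n) ∩ X,
      |f t - f (a n)| = t - a n ∧ |f t - f (b n)| = b n - t := by
    rintro t ⟨⟨hta, htb⟩, htX⟩
    have h1 : |f t - f (a n)| ≤ t - a n := by
      have := hne t htX (a n) haX
      rwa [abs_of_nonneg (show (0:ℝ) ≤ t - a n by linarith)] at this
    have h2 : |f t - f (b n)| ≤ b n - t := by
      have := hne t htX (b n) hbX
      rwa [abs_of_nonpos (show t - b n ≤ 0 by linarith), neg_sub] at this
    have h3 : |f (a n) - f (b n)| = b n - a n := by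
      rcases hcase with ⟨ha', hb'⟩ | ⟨ha', hb'⟩
      · rw [ha', hb', abs_of_nonpos (by linarith), neg_sub]
      · rw [ha', hb', abs_of_nonneg (by linarith)]
    have h4 : |f (a n) - f (b n)| ≤ |f t - f (a n)| + |f t - f (b n)| := by
      have := abs_sub_abs_le_abs_sub (f t - f (b n)) (f t - f (a n))
      calc |f (a n) - f (b n)| = |(f t - f (b n)) - (f t - f (a n))| := by ring_nf
        _ ≤ |f t - f (b n)| + |f t - f (a n)| := abs_sub _ _
        _ = |f t - f (a n)| + |f t - f (b n)| := by ring
    constructor <;> linarith [abs_nonneg (f t - f (a n)), abs_nonneg (f t - f (b n))]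
  -- the formula
  have hform : (f (a n) = a n ∧ ∀ t ∈ Set.Icc (a n) (b n) ∩ X, f t = t) ∨
      (f (a n) = b n ∧ ∀ t ∈ Set.Icc (a n) (b n) ∩ X, f t = a n + b n - t) := by
    rcases hcase with ⟨ha', hb'⟩ | ⟨ha', hb'⟩
    · left
      refine ⟨ha', fun t ht => ?_⟩
      obtain ⟨e1, e2⟩ := hkey t ht
      rw [ha'] at e1; rw [hb'] at e2
      rcases abs_eq (by linarith [ht.1.1] : (0:ℝ) ≤ t - a n) |>.1 e1 with c1 | c1 <;>
      rcases abs_eq (by linarith [ht.1.2] : (0:ℝ) ≤ b n - t) |>.1 e2 with c2 | c2 <;>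
      linarith
    · right
      refine ⟨ha', fun t ht => ?_⟩
      obtain ⟨e1, e2⟩ := hkey t ht
      rw [ha'] at e1; rw [hb'] at e2
      rcases abs_eq (by linarith [ht.1.1] : (0:ℝ) ≤ t - a n) |>.1 e1 with c1 | c1 <;>
      rcases abs_eq (by linarith [ht.1.2] : (0:ℝ) ≤ b n - t) |>.1 e2 with c2 | c2 <;>
      linarith
  refine ⟨⟨?_, ?_⟩, hform⟩
  · -- BijOn
    rcases hform with ⟨_, hid⟩ | ⟨_, hid⟩
    · refine ⟨fun x hx => ?_, fun x hx y hy h => ?_, fun y hy => ⟨y, hy, hid y hy⟩⟩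
      · rw [hid x hx]; exact hx
      · rw [hid x hx, hid y hy] at h; exact h
    · refine ⟨fun x hx => ?_, fun x hx y hy h => ?_, fun y hy => ?_⟩
      · rw [hid x hx]; exact hrefl x hx
      · rw [hid x hx, hid y hy] at h; linarith
      · refine ⟨a n + b n - y, hrefl y hy, ?_⟩
        rw [hid _ (hrefl y hy)]; ring
  · -- isometry
    rcases hform with ⟨_, hid⟩ | ⟨_, hid⟩
    · intro x hx y hy; rw [hid x hx, hid y hy]
    · intro x hx y hy
      rw [hid x hx, hid y hy]
      rw [show a n + b n - x - (a n + b n - y) = -(x - y) by ring, abs_neg]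
end

section
/- (Lemma 4) Let f : X → X be a non-expansive bijection. Then for every n ∈ ℕ, the restriction of f to [a n, b n] ∩ X is an isometry of [a n, b n] ∩ X onto [a n, b n] ∩ X. -/
/-!
A point of `X` is a condensation point (every neighbourhood meets `X` in an uncountable set)
exactly when it lies in no open interval `(a k, b k)`: there `X` consists of rationals, whereas the
endpoints and the points of `A` are limits of the `ℵ₁`-dense sets `A N` (each `a n` closes the gap
`(b N, a (m N))` that starts at the last `b N` below `a n`). A non-expansive injection maps
condensation points to condensation points.

By strong induction on `n`: a rational `q` near the centre of `[a n, b n]` is not a condensation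
point, so its preimage lies in some `(a k, b k)`; `k < n` is excluded by the induction hypothesis,
and `k > n` because `[a k, b k]` is so short that `f (a k)` would land inside `(a n, b n)`. So `f`
reaches both halves of `[a n, b n]` from inside it while sending the endpoints outside `(a n, b n)`;
non-expansiveness then forces `f` to fix or swap the endpoints, and to be the identity or the
reflection on the whole interval.
-/

open Set Topology

theorem finite_of_subset_Icc_of_pairwise_le_abs_sub {s : Set ℝ} {d x y : ℝ} (hd : 0 < d)
    (hs : s ⊆ Icc x y) (hsep : s.Pairwise fun t u => d ≤ |t - u|) : s.Finite := by
  have hinj : InjOn (fun t => ⌊t / d⌋) s := by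
    intro t ht u hu htu
    by_contra hne
    have hclose := Int.abs_sub_lt_one_of_floor_eq_floor htu
    rw [← sub_div, abs_div, abs_of_pos hd, div_lt_one hd] at hclose
    exact (hsep ht hu hne).not_gt hclose
  refine Finite.of_finite_image ((finite_Icc ⌊x / d⌋ ⌊y / d⌋).subset ?_) hinj
  rintro _ ⟨t, ht, rfl⟩
  exact ⟨Int.floor_mono (div_le_div_of_nonneg_right (hs ht).1 hd.le),
    Int.floor_mono (div_le_div_of_nonneg_right (hs ht).2 hd.le)⟩

theorem lt_or_lt_of_disjoint_Icc_s8 {α : Type*} [LinearOrder α] {a₁ b₁ a₂ b₂ : α}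
    (h₁ : a₁ ≤ b₁) (h₂ : a₂ ≤ b₂) (h : Disjoint (Icc a₁ b₁) (Icc a₂ b₂)) :
    b₁ < a₂ ∨ b₂ < a₁ := by
  by_contra! hc
  exact disjoint_left.1 h (show max a₁ a₂ ∈ Icc a₁ b₁ from ⟨le_max_left _ _, max_le h₁ hc.1⟩)
    ⟨le_max_right _ _, max_le hc.2 h₂⟩

def IsCondensationPoint {α : Type*} [TopologicalSpace α] (X : Set α) (x : α) : Prop :=
  ∀ U ∈ 𝓝 x, ¬ (X ∩ U).Countable

section Condensation

variable {α β : Type*}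

theorem isCondensationPoint_of_mem_closure [TopologicalSpace α] {s A X : Set α} {x : α}
    (hs : IsOpen s) (hAX : A ⊆ X)
    (hA : ∀ U, IsOpen U → U.Nonempty → U ⊆ s → ¬ (A ∩ U).Countable) (hx : x ∈ closure s) :
    IsCondensationPoint X x := by
  intro U hU hcount
  have hne : (interior U ∩ s).Nonempty :=
    mem_closure_iff.1 hx _ isOpen_interior (mem_interior_iff_mem_nhds.2 hU)
  refine hA _ (isOpen_interior.inter hs) hne inter_subset_right (hcount.mono ?_)
  exact inter_subset_inter hAX (inter_subset_left.trans interior_subset)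

theorem IsCondensationPoint.image [PseudoMetricSpace α] [PseudoMetricSpace β] {X : Set α}
    {Y : Set β} {f : α → β} {x : α} (h : IsCondensationPoint X x)
    (hmaps : MapsTo f X Y) (hinj : InjOn f X) (hf : ∀ y ∈ X, dist (f y) (f x) ≤ dist y x) :
    IsCondensationPoint Y (f x) := by
  intro U hU hcount
  obtain ⟨ε, hε, hball⟩ := Metric.mem_nhds_iff.1 hU
  refine h _ (Metric.ball_mem_nhds x hε) (countable_of_injective_of_countable_image
    (hinj.mono inter_subset_left) (hcount.mono ?_))
  rintro _ ⟨y, ⟨hyX, hy⟩, rfl⟩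
  exact ⟨hmaps hyX, hball ((hf y hyX).trans_lt hy)⟩

end Condensation

section NonExpansive

variable {S : Set ℝ} {f : ℝ → ℝ} {u v : ℝ}

theorem eqOn_id_of_fixed_endpoints (hf : ∀ x ∈ S, ∀ y ∈ S, |f x - f y| ≤ |x - y|)
    (hu : u ∈ S) (hv : v ∈ S) (hfu : f u = u) (hfv : f v = v) : EqOn f id (Icc u v ∩ S) := by
  rintro x ⟨⟨hux, hxv⟩, hx⟩
  have hleft := hf x hx u hu
  have hright := hf x hx v hv
  rw [hfu, abs_of_nonneg (sub_nonneg.2 hux)] at hleft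
  rw [hfv, abs_sub_comm x, abs_of_nonneg (sub_nonneg.2 hxv)] at hright
  show f x = x
  linarith [(abs_le.1 hleft).2, (abs_le.1 hright).1]

theorem eqOn_reflect_of_swapped_endpoints (hf : ∀ x ∈ S, ∀ y ∈ S, |f x - f y| ≤ |x - y|)
    (hu : u ∈ S) (hv : v ∈ S) (hfu : f u = v) (hfv : f v = u) :
    EqOn f (fun x => u + v - x) (Icc u v ∩ S) := by
  rintro x ⟨⟨hux, hxv⟩, hx⟩
  have hleft := hf x hx u hu
  have hright := hf x hx v hv
  rw [hfu, abs_of_nonneg (sub_nonneg.2 hux)] at hleft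
  rw [hfv, abs_sub_comm x, abs_of_nonneg (sub_nonneg.2 hxv)] at hright
  linarith [(abs_le.1 hleft).1, (abs_le.1 hright).2]

theorem fixed_or_swapped_endpoints (hf : ∀ x ∈ S, ∀ y ∈ S, |f x - f y| ≤ |x - y|)
    (hu : u ∈ S) (hv : v ∈ S) (huv : u ≤ v) (hfu : f u ∉ Ioo u v) (hfv : f v ∉ Ioo u v)
    {x₁ x₂ : ℝ} (hx₁ : x₁ ∈ Icc u v ∩ S) (hx₂ : x₂ ∈ Icc u v ∩ S)
    (hfx₁ : (u + v) / 2 < f x₁) (hfx₂ : f x₂ < (u + v) / 2) :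
    (f u = u ∧ f v = v) ∨ (f u = v ∧ f v = u) := by
  have hdist : ∀ y ∈ S, ∀ z ∈ S, y ≤ z → -(z - y) ≤ f y - f z ∧ f y - f z ≤ z - y :=
    fun y hy z hz hyz => abs_le.1 <| (hf y hy z hz).trans_eq <| by
      rw [abs_sub_comm, abs_of_nonneg (sub_nonneg.2 hyz)]
  obtain ⟨⟨hux₁, hx₁v⟩, hx₁S⟩ := hx₁
  obtain ⟨⟨hux₂, hx₂v⟩, hx₂S⟩ := hx₂
  have := hdist u hu v hv huv
  have := hdist u hu x₁ hx₁S hux₁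
  have := hdist x₁ hx₁S v hv hx₁v
  have := hdist u hu x₂ hx₂S hux₂
  have := hdist x₂ hx₂S v hv hx₂v
  simp only [mem_Ioo, not_and_or, not_lt] at hfu hfv
  rcases hfu with hfu | hfu <;> rcases hfv with hfv | hfv
  · exfalso; linarith
  · exact Or.inl ⟨by linarith, by linarith⟩
  · exact Or.inr ⟨by linarith, by linarith⟩
  · exfalso; linarith

theorem eqOn_id_or_eqOn_reflect (hf : ∀ x ∈ S, ∀ y ∈ S, |f x - f y| ≤ |x - y|)
    (hu : u ∈ S) (hv : v ∈ S) (huv : u ≤ v) (hfu : f u ∉ Ioo u v) (hfv : f v ∉ Ioo u v)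
    {x₁ x₂ : ℝ} (hx₁ : x₁ ∈ Icc u v ∩ S) (hx₂ : x₂ ∈ Icc u v ∩ S)
    (hfx₁ : (u + v) / 2 < f x₁) (hfx₂ : f x₂ < (u + v) / 2) :
    EqOn f id (Icc u v ∩ S) ∨ EqOn f (fun x => u + v - x) (Icc u v ∩ S) :=
  (fixed_or_swapped_endpoints hf hu hv huv hfu hfv hx₁ hx₂ hfx₁ hfx₂).imp
    (fun h => eqOn_id_of_fixed_endpoints hf hu hv h.1 h.2)
    (fun h => eqOn_reflect_of_swapped_endpoints hf hu hv h.1 h.2)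

theorem bijOn_reflect {c : ℝ} (hS : ∀ x ∈ S, c - x ∈ S) : BijOn (fun x => c - x) S S :=
  InvOn.bijOn ⟨fun x _ => sub_sub_cancel c x, fun x _ => sub_sub_cancel c x⟩ hS hS

end NonExpansive

section IntervalFamily

variable {a b : ℕ → ℝ}

theorem le_abs_sub_of_ne (hlt : ∀ n, a n < b n)
    (hdisj : ∀ i j, i ≠ j → Disjoint (Icc (a i) (b i)) (Icc (a j) (b j)))
    (hgap : ∀ i j, b i < a j → a j - b i > b 0 - a 0) {i j : ℕ} (hij : i ≠ j) :
    b 0 - a 0 ≤ |b i - b j| := by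
  rcases lt_or_lt_of_disjoint_Icc_s8 (hlt i).le (hlt j).le (hdisj i j hij) with h | h
  · exact le_abs.2 (Or.inr (by linarith [hgap i j h, hlt j]))
  · exact le_abs.2 (Or.inl (by linarith [hgap j i h, hlt i]))

/-- Every interval closes one of the gaps `(b N, a (m N))`. -/
theorem surjective_of_gaps (hlt : ∀ n, a n < b n)
    (hdisj : ∀ i j, i ≠ j → Disjoint (Icc (a i) (b i)) (Icc (a j) (b j)))
    (hgap : ∀ i j, b i < a j → a j - b i > b 0 - a 0)
    (hcof : ∀ x : ℝ, ∃ k l, b k < x ∧ x < a l) {m : ℕ → ℕ} (hm : ∀ n, b n < a (m n))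
    (hmgap : ∀ n, Disjoint (Ioo (b n) (a (m n))) (⋃ k, Icc (a k) (b k))) :
    Function.Surjective m := by
  intro n
  obtain ⟨k₀, -, hk₀, -⟩ := hcof (a n)
  set s : Set ℝ := {t | t ∈ range b ∧ b k₀ ≤ t ∧ t < a n}
  have hsep : s.Pairwise fun t u => b 0 - a 0 ≤ |t - u| := by
    rintro _ ⟨⟨i, rfl⟩, -⟩ _ ⟨⟨j, rfl⟩, -⟩ hne
    exact le_abs_sub_of_ne hlt hdisj hgap (ne_of_apply_ne b hne)
  have hfin : s.Finite := finite_of_subset_Icc_of_pairwise_le_abs_sub (sub_pos.2 (hlt 0))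
    (fun t ht => ⟨ht.2.1, ht.2.2.le⟩) hsep
  obtain ⟨_, ⟨⟨N, rfl⟩, hk₀N, hNn⟩, hNmax⟩ :=
    exists_max_image s id hfin ⟨b k₀, ⟨k₀, rfl⟩, le_rfl, hk₀⟩
  have hmN : a (m N) ≤ a n := by
    by_contra! h
    exact disjoint_left.1 (hmgap N) ⟨hNn, h⟩ (mem_iUnion.2 ⟨n, le_rfl, (hlt n).le⟩)
  refine ⟨N, by_contra fun hne => ?_⟩
  rcases lt_or_lt_of_disjoint_Icc_s8 (hlt _).le (hlt n).le (hdisj _ _ hne) with h | h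
  · have : b (m N) ≤ b N := hNmax _ ⟨⟨m N, rfl⟩, by linarith [hm N, hlt (m N)], h⟩
    linarith [hm N, hlt (m N)]
  · linarith [hlt n]

end IntervalFamily

section Space

variable {a b : ℕ → ℝ} {m : ℕ → ℕ} {A : ℕ → Set ℝ} {X : Set ℝ}

theorem mem_of_exists_ratCast_eq
    (hX : X = ⋃ n, (({x : ℝ | ∃ q : ℚ, (q : ℝ) = x} ∩ Icc (a n) (b n)) ∪ A n)) {n : ℕ} {x : ℝ}
    (hq : ∃ q : ℚ, (q : ℝ) = x) (hx : x ∈ Icc (a n) (b n)) : x ∈ X :=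
  hX ▸ mem_iUnion.2 ⟨n, Or.inl ⟨hq, hx⟩⟩

theorem subset_of_eq_iUnion
    (hX : X = ⋃ n, (({x : ℝ | ∃ q : ℚ, (q : ℝ) = x} ∩ Icc (a n) (b n)) ∪ A n)) (n : ℕ) :
    A n ⊆ X :=
  fun _ hx => hX ▸ mem_iUnion.2 ⟨n, Or.inr hx⟩

theorem exists_ratCast_eq_of_mem_Icc
    (hX : X = ⋃ n, (({x : ℝ | ∃ q : ℚ, (q : ℝ) = x} ∩ Icc (a n) (b n)) ∪ A n))
    (hmgap : ∀ n, Disjoint (Ioo (b n) (a (m n))) (⋃ k, Icc (a k) (b k)))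
    (hA : ∀ n, A n ⊆ Ioo (b n) (a (m n))) {n : ℕ} {x : ℝ} (hx : x ∈ Icc (a n) (b n) ∩ X) :
    ∃ q : ℚ, (q : ℝ) = x := by
  obtain ⟨k, ⟨hq, -⟩ | hAk⟩ := mem_iUnion.1 (hX ▸ hx.2)
  · exact hq
  · exact absurd (mem_iUnion.2 ⟨n, hx.1⟩) (disjoint_left.1 (hmgap k) (hA k hAk))

theorem add_sub_mem_of_mem_Icc
    (hX : X = ⋃ n, (({x : ℝ | ∃ q : ℚ, (q : ℝ) = x} ∩ Icc (a n) (b n)) ∪ A n))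
    (hmgap : ∀ n, Disjoint (Ioo (b n) (a (m n))) (⋃ k, Icc (a k) (b k)))
    (hA : ∀ n, A n ⊆ Ioo (b n) (a (m n)))
    (haq : ∀ n, ∃ q : ℚ, (q : ℝ) = a n) (hbq : ∀ n, ∃ q : ℚ, (q : ℝ) = b n)
    {n : ℕ} {x : ℝ} (hx : x ∈ Icc (a n) (b n) ∩ X) : a n + b n - x ∈ Icc (a n) (b n) ∩ X := by
  obtain ⟨q, rfl⟩ := exists_ratCast_eq_of_mem_Icc hX hmgap hA hx
  obtain ⟨qa, hqa⟩ := haq n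
  obtain ⟨qb, hqb⟩ := hbq n
  have hmem : a n + b n - q ∈ Icc (a n) (b n) := ⟨by linarith [hx.1.2], by linarith [hx.1.1]⟩
  exact ⟨hmem, mem_of_exists_ratCast_eq hX ⟨qa + qb - q, by push_cast [hqa, hqb]; rfl⟩ hmem⟩

theorem isCondensationPoint_of_mem_Icc_gap (hm : ∀ n, b n < a (m n)) (hAX : ∀ n, A n ⊆ X)
    (hAcard : ∀ n, ∀ U : Set ℝ, IsOpen U → U.Nonempty → U ⊆ Ioo (b n) (a (m n)) →
      Cardinal.mk ↥(A n ∩ U) = Cardinal.aleph 1)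
    {n : ℕ} {x : ℝ} (hx : x ∈ Icc (b n) (a (m n))) : IsCondensationPoint X x :=
  isCondensationPoint_of_mem_closure isOpen_Ioo (hAX n)
    (fun U hU hne hsub hcount => Cardinal.aleph0_lt_aleph_one.not_ge <|
      hAcard n U hU hne hsub ▸ Cardinal.le_aleph0_iff_set_countable.2 hcount)
    (by rwa [closure_Ioo (hm n).ne])

theorem not_isCondensationPoint_of_mem_Ioo
    (hrat : ∀ n x, x ∈ Icc (a n) (b n) ∩ X → ∃ q : ℚ, (q : ℝ) = x) {k : ℕ} {x : ℝ}
    (hx : x ∈ Ioo (a k) (b k)) : ¬ IsCondensationPoint X x := fun h =>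
  h _ (Ioo_mem_nhds hx.1 hx.2) ((countable_range ((↑) : ℚ → ℝ)).mono
    fun y hy => hrat k y ⟨Ioo_subset_Icc_self hy.2, hy.1⟩)

theorem isCondensationPoint_of_forall_not_mem_Ioo
    (hX : X = ⋃ n, (({x : ℝ | ∃ q : ℚ, (q : ℝ) = x} ∩ Icc (a n) (b n)) ∪ A n))
    (hm : ∀ n, b n < a (m n)) (hA : ∀ n, A n ⊆ Ioo (b n) (a (m n)))
    (hAcard : ∀ n, ∀ U : Set ℝ, IsOpen U → U.Nonempty → U ⊆ Ioo (b n) (a (m n)) →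
      Cardinal.mk ↥(A n ∩ U) = Cardinal.aleph 1)
    (ha : ∀ n, IsCondensationPoint X (a n)) (hb : ∀ n, IsCondensationPoint X (b n))
    {x : ℝ} (hx : x ∈ X) (hIoo : ∀ k, x ∉ Ioo (a k) (b k)) : IsCondensationPoint X x := by
  obtain ⟨k, ⟨-, hxa, hxb⟩ | hAk⟩ := mem_iUnion.1 (hX ▸ hx)
  · rcases hxa.eq_or_lt with rfl | hxa
    · exact ha k
    rcases hxb.eq_or_lt with rfl | hxb
    · exact hb k
    exact absurd ⟨hxa, hxb⟩ (hIoo k)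
  · exact isCondensationPoint_of_mem_Icc_gap hm (subset_of_eq_iUnion hX) hAcard
      (Ioo_subset_Icc_self (hA k hAk))

end Space

section Rigidity

variable {a b : ℕ → ℝ} {X : Set ℝ} {f : ℝ → ℝ}

theorem mem_Icc_of_apply_mem_Ioo (hlt : ∀ n, a n < b n)
    (hdisj : ∀ i j, i ≠ j → Disjoint (Icc (a i) (b i)) (Icc (a j) (b j)))
    (hlen : Antitone fun n => b n - a n) (haX : ∀ n, a n ∈ X)
    (ha : ∀ n, IsCondensationPoint X (a n))
    (hlight : ∀ k, ∀ x ∈ Ioo (a k) (b k), ¬ IsCondensationPoint X x)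
    (hheavy : ∀ x ∈ X, (∀ k, x ∉ Ioo (a k) (b k)) → IsCondensationPoint X x)
    (hfcond : ∀ x ∈ X, IsCondensationPoint X x → IsCondensationPoint X (f x))
    (hne : ∀ x ∈ X, ∀ y ∈ X, |f x - f y| ≤ |x - y|)
    {n : ℕ} (IH : ∀ k < n, MapsTo f (Icc (a k) (b k) ∩ X) (Icc (a k) (b k)))
    {x : ℝ} (hx : x ∈ X)
    (hfx : f x ∈ Ioo (a n + (b (n + 1) - a (n + 1))) (b n - (b (n + 1) - a (n + 1)))) :
    x ∈ Icc (a n) (b n) := by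
  have hfxn : f x ∈ Ioo (a n) (b n) :=
    ⟨by linarith [hfx.1, hlt (n + 1)], by linarith [hfx.2, hlt (n + 1)]⟩
  obtain ⟨k, hxk⟩ : ∃ k, x ∈ Ioo (a k) (b k) := by
    by_contra! h
    exact hlight n _ hfxn (hfcond x hx (hheavy x hx h))
  rcases lt_trichotomy k n with hkn | rfl | hnk
  · exact absurd (Ioo_subset_Icc_self hfxn)
      (disjoint_left.1 (hdisj k n hkn.ne) (IH k hkn ⟨Ioo_subset_Icc_self hxk, hx⟩))
  · exact Ioo_subset_Icc_self hxk
  · -- `[a k, b k]` is shorter than the margin around `f x`, so `f (a k)` lands in `(a n, b n)`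
    have hclose : |f (a k) - f x| < b (n + 1) - a (n + 1) := calc
      |f (a k) - f x| ≤ |a k - x| := hne _ (haX k) x hx
      _ = x - a k := by rw [abs_sub_comm, abs_of_pos (sub_pos.2 hxk.1)]
      _ < b k - a k := by linarith [hxk.2]
      _ ≤ b (n + 1) - a (n + 1) := hlen hnk
    obtain ⟨h₁, h₂⟩ := abs_lt.1 hclose
    exact absurd (hfcond _ (haX k) (ha k))
      (hlight n _ ⟨by linarith [hfx.1], by linarith [hfx.2]⟩)

theorem eqOn_id_or_eqOn_reflect_of_isCondensationPoint (hlt : ∀ n, a n < b n)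
    (hdisj : ∀ i j, i ≠ j → Disjoint (Icc (a i) (b i)) (Icc (a j) (b j)))
    (hhalf : ∀ n, 2 * (b (n + 1) - a (n + 1)) < b n - a n)
    (hQX : ∀ n (q : ℚ), (q : ℝ) ∈ Icc (a n) (b n) → (q : ℝ) ∈ X)
    (haX : ∀ n, a n ∈ X) (hbX : ∀ n, b n ∈ X)
    (ha : ∀ n, IsCondensationPoint X (a n)) (hb : ∀ n, IsCondensationPoint X (b n))
    (hlight : ∀ k, ∀ x ∈ Ioo (a k) (b k), ¬ IsCondensationPoint X x)
    (hheavy : ∀ x ∈ X, (∀ k, x ∉ Ioo (a k) (b k)) → IsCondensationPoint X x)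
    (hbij : BijOn f X X) (hne : ∀ x ∈ X, ∀ y ∈ X, |f x - f y| ≤ |x - y|) (n : ℕ) :
    EqOn f id (Icc (a n) (b n) ∩ X) ∨
      EqOn f (fun x => a n + b n - x) (Icc (a n) (b n) ∩ X) := by
  have hlen : Antitone fun n => b n - a n :=
    antitone_nat_of_succ_le fun n => by linarith [hhalf n, hlt (n + 1)]
  have hfcond : ∀ x ∈ X, IsCondensationPoint X x → IsCondensationPoint X (f x) :=
    fun x hx h => h.image hbij.mapsTo hbij.injOn fun y hy => by
      simpa only [Real.dist_eq] using hne y hy x hx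
  induction n using Nat.strong_induction_on with
  | _ n IH =>
  have hmaps : ∀ k < n, MapsTo f (Icc (a k) (b k) ∩ X) (Icc (a k) (b k)) := by
    intro k hk x hx
    rcases IH k hk with h | h <;> rw [h hx]
    · exact hx.1
    · exact ⟨by linarith [hx.1.2], by linarith [hx.1.1]⟩
  set e := b (n + 1) - a (n + 1)
  have he : 0 < e := sub_pos.2 (hlt (n + 1))
  have hpre : ∀ q : ℚ, (q : ℝ) ∈ Ioo (a n + e) (b n - e) →
      ∃ x ∈ Icc (a n) (b n) ∩ X, f x = q := by
    intro q hq
    obtain ⟨x, hx, hfx⟩ := hbij.surjOn (hQX n q ⟨by linarith [hq.1], by linarith [hq.2]⟩)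
    exact ⟨x, ⟨mem_Icc_of_apply_mem_Ioo hlt hdisj hlen haX ha hlight hheavy hfcond hne hmaps hx
      (hfx ▸ hq), hx⟩, hfx⟩
  obtain ⟨q₁, hq₁, hq₁'⟩ := exists_rat_btwn (show (a n + b n) / 2 < b n - e by linarith [hhalf n])
  obtain ⟨q₂, hq₂, hq₂'⟩ := exists_rat_btwn (show a n + e < (a n + b n) / 2 by linarith [hhalf n])
  obtain ⟨x₁, hx₁, hfx₁⟩ := hpre q₁ ⟨by linarith, hq₁'⟩
  obtain ⟨x₂, hx₂, hfx₂⟩ := hpre q₂ ⟨hq₂, by linarith⟩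
  exact eqOn_id_or_eqOn_reflect hne (haX n) (hbX n) (hlt n).le
    (fun h => hlight n _ h (hfcond _ (haX n) (ha n)))
    (fun h => hlight n _ h (hfcond _ (hbX n) (hb n))) hx₁ hx₂ (hfx₁ ▸ hq₁) (hfx₂ ▸ hq₂')

end Rigidity

theorem stmt8_general
    (a b : ℕ → ℝ)
    (hlt : ∀ n, a n < b n)
    (haq : ∀ n, ∃ q : ℚ, (q : ℝ) = a n)
    (hbq : ∀ n, ∃ q : ℚ, (q : ℝ) = b n)
    (hdisj : ∀ i j, i ≠ j → Disjoint (Set.Icc (a i) (b i)) (Set.Icc (a j) (b j)))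
    (hhalf : ∀ n, 2 * (b (n + 1) - a (n + 1)) < b n - a n)
    (hgap : ∀ i j, b i < a j → a j - b i > b 0 - a 0)
    (hcof : ∀ x : ℝ, ∃ k l, b k < x ∧ x < a l)
    (m : ℕ → ℕ)
    (hm : ∀ n, b n < a (m n))
    (hmgap : ∀ n, Disjoint (Set.Ioo (b n) (a (m n))) (⋃ k, Set.Icc (a k) (b k)))
    (A : ℕ → Set ℝ)
    (hA : ∀ n, A n ⊆ Set.Ioo (b n) (a (m n)))
    (hAcard : ∀ n, ∀ U : Set ℝ, IsOpen U → U.Nonempty → U ⊆ Set.Ioo (b n) (a (m n)) →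
      Cardinal.mk ↥(A n ∩ U) = Cardinal.aleph 1)
    (X : Set ℝ)
    (hX : X = ⋃ n, (({x : ℝ | ∃ q : ℚ, (q : ℝ) = x} ∩ Set.Icc (a n) (b n)) ∪ A n))
    (f : ℝ → ℝ)
    (hbij : Set.BijOn f X X)
    (hne : ∀ x ∈ X, ∀ y ∈ X, |f x - f y| ≤ |x - y|) :
    ∀ n : ℕ,
      Set.BijOn f (Set.Icc (a n) (b n) ∩ X) (Set.Icc (a n) (b n) ∩ X) ∧
      ∀ x ∈ Set.Icc (a n) (b n) ∩ X, ∀ y ∈ Set.Icc (a n) (b n) ∩ X,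
        |f x - f y| = |x - y| := by
  have hrat : ∀ n x, x ∈ Icc (a n) (b n) ∩ X → ∃ q : ℚ, (q : ℝ) = x :=
    fun _ _ => exists_ratCast_eq_of_mem_Icc hX hmgap hA
  have hgapX : ∀ n, ∀ x ∈ Icc (b n) (a (m n)), IsCondensationPoint X x :=
    fun _ _ => isCondensationPoint_of_mem_Icc_gap hm (subset_of_eq_iUnion hX) hAcard
  have ha : ∀ n, IsCondensationPoint X (a n) := fun n => by
    obtain ⟨N, rfl⟩ := surjective_of_gaps hlt hdisj hgap hcof hm hmgap n
    exact hgapX N _ ⟨(hm N).le, le_rfl⟩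
  have hb : ∀ n, IsCondensationPoint X (b n) := fun n => hgapX n _ ⟨le_rfl, (hm n).le⟩
  intro n
  rcases eqOn_id_or_eqOn_reflect_of_isCondensationPoint hlt hdisj hhalf
      (fun _ q => mem_of_exists_ratCast_eq hX ⟨q, rfl⟩)
      (fun n => mem_of_exists_ratCast_eq hX (haq n) ⟨le_rfl, (hlt n).le⟩)
      (fun n => mem_of_exists_ratCast_eq hX (hbq n) ⟨(hlt n).le, le_rfl⟩) ha hb
      (fun _ _ => not_isCondensationPoint_of_mem_Ioo hrat)
      (fun _ => isCondensationPoint_of_forall_not_mem_Ioo hX hm hA hAcard ha hb) hbij hne n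
    with hid | hrefl
  · exact ⟨(bijOn_id _).congr hid.symm, fun x hx y hy => by rw [hid hx, hid hy]; rfl⟩
  · refine ⟨(bijOn_reflect fun x hx => add_sub_mem_of_mem_Icc hX hmgap hA haq hbq hx).congr
      hrefl.symm, fun x hx y hy => ?_⟩
    rw [hrefl hx, hrefl hy, sub_sub_sub_cancel_left, abs_sub_comm]

theorem stmt8
    (a b : ℕ → ℝ)
    (hlt : ∀ n, a n < b n)
    (haq : ∀ n, ∃ q : ℚ, (q : ℝ) = a n)
    (hbq : ∀ n, ∃ q : ℚ, (q : ℝ) = b n)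
    (hdisj : ∀ i j, i ≠ j → Disjoint (Set.Icc (a i) (b i)) (Set.Icc (a j) (b j)))
    (hhalf : ∀ n, 2 * (b (n + 1) - a (n + 1)) < b n - a n)
    (hgap : ∀ i j, b i < a j → a j - b i > b 0 - a 0)
    (h01 : a 0 < a 1)
    (hcof : ∀ x : ℝ, ∃ k l, b k < x ∧ x < a l)
    (m : ℕ → ℕ)
    (hm : ∀ n, b n < a (m n))
    (hmgap : ∀ n, Disjoint (Set.Ioo (b n) (a (m n))) (⋃ k, Set.Icc (a k) (b k)))
    (A : ℕ → Set ℝ)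
    (hA : ∀ n, A n ⊆ Set.Ioo (b n) (a (m n)))
    (hAcard : ∀ n, ∀ U : Set ℝ, IsOpen U → U.Nonempty → U ⊆ Set.Ioo (b n) (a (m n)) →
      Cardinal.mk ↥(A n ∩ U) = Cardinal.aleph 1)
    (X : Set ℝ)
    (hX : X = ⋃ n, (({x : ℝ | ∃ q : ℚ, (q : ℝ) = x} ∩ Set.Icc (a n) (b n)) ∪ A n))
    (f : ℝ → ℝ)
    (hbij : Set.BijOn f X X)
    (hne : ∀ x ∈ X, ∀ y ∈ X, |f x - f y| ≤ |x - y|) :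
    ∀ n : ℕ,
      Set.BijOn f (Set.Icc (a n) (b n) ∩ X) (Set.Icc (a n) (b n) ∩ X) ∧
      ∀ x ∈ Set.Icc (a n) (b n) ∩ X, ∀ y ∈ Set.Icc (a n) (b n) ∩ X,
        |f x - f y| = |x - y| :=
  stmt8_general a b hlt haq hbq hdisj hhalf hgap hcof m hm hmgap A hA hAcard X hX f hbij hne
end

section
/- For every n ∈ ℕ there exists a unique m ∈ ℕ such that b n < a m and the open interval (b n, a m) is disjoint from ⋃_k [a k, b k]. -/
theorem stmt13
    (a b : ℕ → ℝ)
    (hlt : ∀ n, a n < b n)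
    (haq : ∀ n, ∃ q : ℚ, (q : ℝ) = a n)
    (hbq : ∀ n, ∃ q : ℚ, (q : ℝ) = b n)
    (hdisj : ∀ i j, i ≠ j → Disjoint (Set.Icc (a i) (b i)) (Set.Icc (a j) (b j)))
    (hhalf : ∀ n, 2 * (b (n + 1) - a (n + 1)) < b n - a n)
    (hgap : ∀ i j, b i < a j → a j - b i > b 0 - a 0)
    (h01 : a 0 < a 1)
    (hcof : ∀ x : ℝ, ∃ k l, b k < x ∧ x < a l) :
    ∀ n : ℕ, ∃! m : ℕ, b n < a m ∧
      Disjoint (Set.Ioo (b n) (a m)) (⋃ k, Set.Icc (a k) (b k)) := by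
  intro n
  have hδ : (0:ℝ) < b 0 - a 0 := sub_pos.2 (hlt 0)
  -- separation: if a i < a j (i ≠ j) then b i < a j and the gap exceeds b 0 - a 0
  have hbij : ∀ i j, i ≠ j → a i < a j → b i < a j := by
    intro i j hij hij2
    by_contra h
    push_neg at h
    have h1 : a j ∈ Set.Icc (a i) (b i) := ⟨hij2.le, h⟩
    have h2 : a j ∈ Set.Icc (a j) (b j) := ⟨le_refl _, (hlt j).le⟩
    exact absurd h2 (Set.disjoint_left.mp (hdisj i j hij) h1)
  have sep : ∀ i j, i ≠ j → a i < a j → a j - b i > b 0 - a 0 := by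
    intro i j hij hij2
    exact hgap i j (hbij i j hij hij2)
  obtain ⟨k₀, l₀, _, hl₀⟩ := hcof (b n)
  set T : Set ℝ := a '' {m | b n < a m} with hT
  have hTne : T.Nonempty := ⟨a l₀, l₀, hl₀, rfl⟩
  have hTbdd : BddBelow T := by
    refine ⟨b n, ?_⟩
    rintro x ⟨m, hm, rfl⟩
    exact hm.le
  set c := sInf T with hc
  have hlt' : sInf T < c + (b 0 - a 0) := by linarith
  obtain ⟨t, ⟨m₀, hm₀S, rfl⟩, ht⟩ := exists_lt_of_csInf_lt hTne hlt'
  -- a m₀ is the minimum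
  have hmin : ∀ m, b n < a m → a m₀ ≤ a m := by
    intro m hm
    by_contra h
    push_neg at h
    have hne : m ≠ m₀ := by
      intro he; rw [he] at h; exact lt_irrefl _ h
    have hs := sep m m₀ hne h
    have hcle : c ≤ a m := csInf_le hTbdd ⟨m, hm, rfl⟩
    have := (hlt m).le
    linarith
  refine ⟨m₀, ⟨hm₀S, ?_⟩, ?_⟩
  · rw [Set.disjoint_left]
    rintro x ⟨hx1, hx2⟩ hxU
    simp only [Set.mem_iUnion, Set.mem_Icc] at hxU
    obtain ⟨k, hk1, hk2⟩ := hxU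
    have hbk : b n < a k := by
      by_contra h
      push_neg at h
      rcases eq_or_ne k n with rfl | hkn
      · linarith
      · have h1 : b n ∈ Set.Icc (a k) (b k) := ⟨h, by linarith⟩
        have h2 : b n ∈ Set.Icc (a n) (b n) := ⟨(hlt n).le, le_refl _⟩
        exact absurd h2 (Set.disjoint_left.mp (hdisj k n hkn) h1)
    have := hmin k hbk
    linarith
  · rintro m' ⟨hm'lt, hm'disj⟩
    have h1 : a m₀ ≤ a m' := hmin m' hm'lt
    have heq : a m₀ = a m' := by
      rcases lt_or_eq_of_le h1 with h | h
      · exfalso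
        have hmem : a m₀ ∈ Set.Ioo (b n) (a m') := ⟨hm₀S, h⟩
        have hmem2 : a m₀ ∈ ⋃ k, Set.Icc (a k) (b k) :=
          Set.mem_iUnion.mpr ⟨m₀, le_refl _, (hlt m₀).le⟩
        exact absurd hmem2 (Set.disjoint_left.mp hm'disj hmem)
      · exact h
    by_contra hne
    have h1' : a m' ∈ Set.Icc (a m') (b m') := ⟨le_refl _, (hlt m').le⟩
    have h2' : a m' ∈ Set.Icc (a m₀) (b m₀) := ⟨heq.le, heq ▸ (hlt m₀).le⟩
    exact absurd h2' (Set.disjoint_left.mp (hdisj m' m₀ hne) h1')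
end

section
/- The set X is dense in ℝ. -/
theorem stmt14
    (a b : ℕ → ℝ)
    (hlt : ∀ n, a n < b n)
    (haq : ∀ n, ∃ q : ℚ, (q : ℝ) = a n)
    (hbq : ∀ n, ∃ q : ℚ, (q : ℝ) = b n)
    (hdisj : ∀ i j, i ≠ j → Disjoint (Set.Icc (a i) (b i)) (Set.Icc (a j) (b j)))
    (hhalf : ∀ n, 2 * (b (n + 1) - a (n + 1)) < b n - a n)
    (hgap : ∀ i j, b i < a j → a j - b i > b 0 - a 0)
    (h01 : a 0 < a 1)
    (hcof : ∀ x : ℝ, ∃ k l, b k < x ∧ x < a l)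
    (m : ℕ → ℕ)
    (hm : ∀ n, b n < a (m n))
    (hmgap : ∀ n, Disjoint (Set.Ioo (b n) (a (m n))) (⋃ k, Set.Icc (a k) (b k)))
    (A : ℕ → Set ℝ)
    (hA : ∀ n, A n ⊆ Set.Ioo (b n) (a (m n)))
    (hAcard : ∀ n, ∀ U : Set ℝ, IsOpen U → U.Nonempty → U ⊆ Set.Ioo (b n) (a (m n)) →
      Cardinal.mk ↥(A n ∩ U) = Cardinal.aleph 1)
    (X : Set ℝ)
    (hX : X = ⋃ n, (({x : ℝ | ∃ q : ℚ, (q : ℝ) = x} ∩ Set.Icc (a n) (b n)) ∪ A n))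
    (hcover : (Set.univ \ ⋃ k, Set.Icc (a k) (b k)) = ⋃ n, Set.Ioo (b n) (a (m n))) :
    Dense X := by
  rw [dense_iff_inter_open]
  intro U hU ⟨y, hy⟩
  obtain ⟨ε, hε, hball⟩ := Metric.isOpen_iff.mp hU y hy
  rw [Real.ball_eq_Ioo] at hball
  by_cases hyc : y ∈ ⋃ k, Set.Icc (a k) (b k)
  · obtain ⟨k, hk⟩ := Set.mem_iUnion.mp hyc
    have hlo : max (a k) (y - ε) < min (b k) (y + ε) := by
      rcases hk with ⟨h1, h2⟩
      simp only [max_lt_iff, lt_min_iff]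
      constructor
      · exact ⟨hlt k, by linarith⟩
      · exact ⟨by linarith, by linarith⟩
    obtain ⟨q, hq1, hq2⟩ := exists_rat_btwn hlo
    refine ⟨q, hball ⟨lt_of_le_of_lt (le_max_right _ _) hq1,
      lt_of_lt_of_le hq2 (min_le_right _ _)⟩, ?_⟩
    rw [hX]
    exact Set.mem_iUnion.mpr ⟨k, Or.inl ⟨⟨q, rfl⟩,
      ⟨le_of_lt (lt_of_le_of_lt (le_max_left _ _) hq1),
       le_of_lt (lt_of_lt_of_le hq2 (min_le_left _ _))⟩⟩⟩
  · have hy' : y ∈ ⋃ n, Set.Ioo (b n) (a (m n)) := by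
      rw [← hcover]; exact ⟨trivial, hyc⟩
    obtain ⟨n, hn1, hn2⟩ := Set.mem_iUnion.mp hy'
    set V : Set ℝ := Set.Ioo (max (b n) (y - ε)) (min (a (m n)) (y + ε)) with hV
    have hyV : y ∈ V := by
      constructor
      · simp only [max_lt_iff]; exact ⟨hn1, by linarith⟩
      · simp only [lt_min_iff]; exact ⟨hn2, by linarith⟩
    have hVsub : V ⊆ Set.Ioo (b n) (a (m n)) := fun z ⟨h1, h2⟩ =>
      ⟨lt_of_le_of_lt (le_max_left _ _) h1, lt_of_lt_of_le h2 (min_le_left _ _)⟩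
    have hcard := hAcard n V isOpen_Ioo ⟨y, hyV⟩ hVsub
    have hne : (A n ∩ V).Nonempty := by
      rw [Set.nonempty_iff_ne_empty]
      intro h
      rw [h] at hcard
      simp at hcard
      exact (Cardinal.aleph_pos 1).ne' hcard.symm
    obtain ⟨z, hzA, hz1, hz2⟩ := hne
    refine ⟨z, hball ⟨lt_of_le_of_lt (le_max_right _ _) hz1,
      lt_of_lt_of_le hz2 (min_le_right _ _)⟩, ?_⟩
    rw [hX]
    exact Set.mem_iUnion.mpr ⟨n, Or.inr hzA⟩
end

section
/- Let f : X → X be a non-expansive bijection. Then f(a n) = a n and f(b n) = b n for every n ∈ ℕ. -/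
/-!
Extend `f` to a 1-Lipschitz map `F : ℝ → ℝ`. A point of a closed gap `[b p, a (m p)]` cannot be
sent into an open cell `(a k, b k)`: otherwise a neighbourhood of it would inject `ℵ₁` points of
`A p` into the countable set `X ∩ (a k, b k)`, which consists of rationals. By strong induction on
`n`, using that the cells shrink by more than half and are separated by more than the length of
the largest one, every rational of `(a n, b n)` is an image of a point of `[a n, b n]`; by
compactness `F([a n, b n]) ⊇ [a n, b n]`, which for a 1-Lipschitz map forces `F` to fix or swap
the endpoints. A swap is impossible: `F` would carry the gap `[b n, a (m n)]` from `a n` to the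
right of `b n`, across the cell `(a n, b n)`.
-/

open Set

theorem Continuous.mapsTo_closure_compl_of_countable {α β : Type*} [TopologicalSpace α]
    [TopologicalSpace β] {F : α → β} (hF : Continuous F) {S G : Set α} {T O : Set β}
    (hG : IsOpen G) (hO : IsOpen O)
    (hS : ∀ V, IsOpen V → V.Nonempty → V ⊆ G → ¬ (S ∩ V).Countable)
    (hinj : InjOn F S) (hmaps : MapsTo F S T) (hT : (T ∩ O).Countable) :
    MapsTo F (closure G) Oᶜ := by
  have hGO : MapsTo F G Oᶜ := by
    intro x hx hFx
    refine hS (G ∩ F ⁻¹' O) (hG.inter (hO.preimage hF)) ⟨x, hx, hFx⟩ inter_subset_left ?_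
    have hSV : MapsTo F (S ∩ (G ∩ F ⁻¹' O)) (T ∩ O) := fun y hy => ⟨hmaps hy.1, hy.2.2⟩
    exact hSV.countable_of_injOn (hinj.mono inter_subset_left) hT
  simpa only [hO.isClosed_compl.closure_eq] using hGO.closure hF

theorem Icc_subset_of_forall_ratCast_mem {u v : ℝ} {C : Set ℝ} (huv : u < v) (hC : IsClosed C)
    (hQ : ∀ q : ℚ, (q : ℝ) ∈ Ioo u v → (q : ℝ) ∈ C) : Icc u v ⊆ C := by
  rw [← closure_Ioo huv.ne]
  refine (closure_mono (Rat.denseRange_cast.open_subset_closure_inter isOpen_Ioo)).trans ?_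
  rw [closure_closure]
  refine closure_minimal ?_ hC
  rintro _ ⟨hx, q, rfl⟩
  exact hQ q hx

theorem LipschitzWith.fix_or_swap_of_Icc_subset_image {F : ℝ → ℝ} (hF : LipschitzWith 1 F)
    {u v : ℝ} (huv : u < v) (hsub : Icc u v ⊆ F '' Icc u v) :
    (F u = u ∧ F v = v) ∨ (F u = v ∧ F v = u) := by
  obtain ⟨x, hx, hFx⟩ := hsub (left_mem_Icc.2 huv.le)
  obtain ⟨y, hy, hFy⟩ := hsub (right_mem_Icc.2 huv.le)
  have hxy : v - u ≤ |x - y| := by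
    calc v - u = dist (F x) (F y) := by
          rw [hFx, hFy, Real.dist_eq, abs_sub_comm, abs_of_pos (sub_pos.2 huv)]
      _ ≤ dist x y := by simpa only [NNReal.coe_one, one_mul] using hF.dist_le_mul x y
      _ = |x - y| := Real.dist_eq x y
  rcases le_abs'.1 hxy with h | h
  · obtain rfl : x = u := by linarith [hx.1, hy.2]
    obtain rfl : y = v := by linarith [hx.1, hy.2]
    exact Or.inl ⟨hFx, hFy⟩
  · obtain rfl : x = v := by linarith [hx.2, hy.1]
    obtain rfl : y = u := by linarith [hx.2, hy.1]
    exact Or.inr ⟨hFy, hFx⟩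

theorem ContinuousOn.le_of_mapsTo_compl_Ioo {F : ℝ → ℝ} {u v c d : ℝ} (huv : u ≤ v)
    (hF : ContinuousOn F (Icc u v)) (hcd : c < d) (hmaps : MapsTo F (Icc u v) (Ioo c d)ᶜ)
    (hu : F u ≤ c) : F v ≤ c := by
  by_contra! hv
  have hdv : d ≤ F v := not_lt.1 fun h => hmaps (right_mem_Icc.2 huv) ⟨hv, h⟩
  obtain ⟨t, ht, hFt⟩ := intermediate_value_Icc huv hF
    (show (c + d) / 2 ∈ Icc (F u) (F v) by constructor <;> linarith)
  exact hmaps ht (hFt ▸ ⟨by linarith, by linarith⟩)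

structure SeparatedCells (a b : ℕ → ℝ) : Prop where
  lt : ∀ n, a n < b n
  disjoint : ∀ i j, i ≠ j → Disjoint (Icc (a i) (b i)) (Icc (a j) (b j))
  length_succ : ∀ n, 2 * (b (n + 1) - a (n + 1)) < b n - a n
  gap : ∀ i j, b i < a j → a j - b i > b 0 - a 0

namespace SeparatedCells

variable {a b : ℕ → ℝ} {F : ℝ → ℝ}

theorem length_antitone (hc : SeparatedCells a b) : Antitone fun n => b n - a n :=
  antitone_nat_of_succ_le fun n => by linarith [hc.length_succ n, hc.lt (n + 1)]

theorem length_lt_dist (hc : SeparatedCells a b) {i j : ℕ} (hij : i ≠ j) {x y : ℝ}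
    (hx : x ∈ Icc (a i) (b i)) (hy : y ∈ Icc (a j) (b j)) : b 0 - a 0 < dist x y := by
  rw [Real.dist_eq]
  have hbetween : b i < a j ∨ b j < a i := by
    by_contra! h
    exact disjoint_left.1 (hc.disjoint i j hij)
      ⟨le_max_left _ _, max_le (hc.lt i).le h.1⟩ ⟨le_max_right _ _, max_le h.2 (hc.lt j).le⟩
  rcases hbetween with h | h
  · linarith [hc.gap i j h, hx.2, hy.1, neg_abs_le (x - y)]
  · linarith [hc.gap j i h, hx.1, hy.2, le_abs_self (x - y)]

theorem eq_of_image_mem (hc : SeparatedCells a b) (hF : LipschitzWith 1 F) {j n k : ℕ}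
    {x y : ℝ} (hx : x ∈ Icc (a j) (b j)) (hy : y ∈ Icc (a j) (b j))
    (hFx : F x ∈ Icc (a n) (b n)) (hFy : F y ∈ Icc (a k) (b k)) : n = k := by
  by_contra hnk
  have hFxy : dist (F x) (F y) ≤ dist x y := by
    simpa only [NNReal.coe_one, one_mul] using hF.dist_le_mul x y
  linarith [hc.length_lt_dist hnk hFx hFy, Real.dist_le_of_mem_Icc hx hy,
    hc.length_antitone (Nat.zero_le j)]

theorem exists_image_mem_Ioo (hc : SeparatedCells a b) (hF : LipschitzWith 1 F)
    (hb : ∀ j k, F (b j) ∉ Ioo (a k) (b k))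
    (hcov : ∀ n (q : ℚ), (q : ℝ) ∈ Ioo (a n) (b n) → ∃ j, (q : ℝ) ∈ F '' Icc (a j) (b j))
    (n : ℕ) : ∃ x ∈ Icc (a n) (b n), F x ∈ Ioo (a n) (b n) := by
  induction n using Nat.strong_induction_on with
  | _ n ih =>
  set ℓ := b (n + 1) - a (n + 1)
  have hℓ : 0 < ℓ := sub_pos.2 (hc.lt (n + 1))
  obtain ⟨q, hq₁, hq₂⟩ := exists_rat_btwn (show a n + ℓ < b n - ℓ by linarith [hc.length_succ n])
  have hq : (q : ℝ) ∈ Ioo (a n) (b n) := ⟨by linarith, by linarith⟩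
  obtain ⟨j, x, hx, hFx⟩ := hcov n q hq
  rcases lt_trichotomy j n with hjn | rfl | hnj
  · obtain ⟨y, hy, hFy⟩ := ih j hjn
    exact absurd (hc.eq_of_image_mem hF hy hx (Ioo_subset_Icc_self hFy)
      (hFx ▸ Ioo_subset_Icc_self hq)) hjn.ne
  · exact ⟨x, hx, hFx ▸ hq⟩
  · have hdist : dist (F (b j)) q ≤ ℓ := by
      calc dist (F (b j)) q = dist (F (b j)) (F x) := by rw [hFx]
        _ ≤ dist (b j) x := by simpa only [NNReal.coe_one, one_mul] using hF.dist_le_mul _ _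
        _ ≤ b j - a j := Real.dist_le_of_mem_Icc (right_mem_Icc.2 (hc.lt j).le) hx
        _ ≤ ℓ := hc.length_antitone hnj
    rw [Real.dist_eq, abs_le] at hdist
    exact (hb j n ⟨by linarith, by linarith⟩).elim

theorem Icc_subset_image (hc : SeparatedCells a b) (hF : LipschitzWith 1 F)
    (hb : ∀ j k, F (b j) ∉ Ioo (a k) (b k))
    (hcov : ∀ n (q : ℚ), (q : ℝ) ∈ Ioo (a n) (b n) → ∃ j, (q : ℝ) ∈ F '' Icc (a j) (b j))
    (n : ℕ) : Icc (a n) (b n) ⊆ F '' Icc (a n) (b n) := by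
  refine Icc_subset_of_forall_ratCast_mem (hc.lt n) (isCompact_Icc.image hF.continuous).isClosed
    fun q hq => ?_
  obtain ⟨j, x, hx, hFx⟩ := hcov n q hq
  obtain ⟨y, hy, hFy⟩ := hc.exists_image_mem_Ioo hF hb hcov j
  obtain rfl := hc.eq_of_image_mem hF hy hx (Ioo_subset_Icc_self hFy)
    (hFx ▸ Ioo_subset_Icc_self hq)
  exact ⟨x, hx, hFx⟩

end SeparatedCells

section CellsAndGaps

variable {a b : ℕ → ℝ} {m : ℕ → ℕ} {A : ℕ → Set ℝ} {X : Set ℝ} {F : ℝ → ℝ}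

theorem mapsTo_Icc_gap_compl_Ioo (hm : ∀ n, b n < a (m n))
    (hmgap : ∀ n, Disjoint (Ioo (b n) (a (m n))) (⋃ k, Icc (a k) (b k)))
    (hA : ∀ n, A n ⊆ Ioo (b n) (a (m n)))
    (hAcard : ∀ n, ∀ U : Set ℝ, IsOpen U → U.Nonempty → U ⊆ Ioo (b n) (a (m n)) →
      Cardinal.mk ↥(A n ∩ U) = Cardinal.aleph 1)
    (hX : X = ⋃ n, (range ((↑) : ℚ → ℝ) ∩ Icc (a n) (b n)) ∪ A n)
    (hF : Continuous F) (hinj : InjOn F X) (hmaps : MapsTo F X X) (p k : ℕ) :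
    MapsTo F (Icc (b p) (a (m p))) (Ioo (a k) (b k))ᶜ := by
  have hAX : A p ⊆ X := fun x hx => hX ▸ mem_iUnion.2 ⟨p, Or.inr hx⟩
  have hcount : (X ∩ ⋃ k, Ioo (a k) (b k)).Countable := by
    refine (countable_range ((↑) : ℚ → ℝ)).mono ?_
    rintro x ⟨hx, hxO⟩
    obtain ⟨n, ⟨hq, -⟩ | hxA⟩ := mem_iUnion.1 (hX ▸ hx)
    · exact hq
    · exact absurd (iUnion_mono (fun k => Ioo_subset_Icc_self) hxO)
        (disjoint_left.1 (hmgap n) (hA n hxA))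
  have hunc (V : Set ℝ) (hV : IsOpen V) (hVne : V.Nonempty) (hVsub : V ⊆ Ioo (b p) (a (m p))) :
      ¬ (A p ∩ V).Countable := by
    rw [← Cardinal.le_aleph0_iff_set_countable, hAcard p V hV hVne hVsub]
    exact Cardinal.aleph0_lt_aleph_one.not_ge
  have hgap := hF.mapsTo_closure_compl_of_countable isOpen_Ioo
    (isOpen_iUnion fun k => isOpen_Ioo) hunc (hinj.mono hAX) (hmaps.mono_left hAX) hcount
  rw [closure_Ioo (hm p).ne] at hgap
  exact hgap.mono_right (compl_subset_compl.2 (subset_iUnion (fun k => Ioo (a k) (b k)) k))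

theorem exists_ratCast_mem_image_Icc (hA : ∀ n, A n ⊆ Ioo (b n) (a (m n)))
    (hX : X = ⋃ n, (range ((↑) : ℚ → ℝ) ∩ Icc (a n) (b n)) ∪ A n)
    (hgap : ∀ p k, MapsTo F (Icc (b p) (a (m p))) (Ioo (a k) (b k))ᶜ) (hsurj : SurjOn F X X)
    (n : ℕ) (q : ℚ) (hq : (q : ℝ) ∈ Ioo (a n) (b n)) : ∃ j, (q : ℝ) ∈ F '' Icc (a j) (b j) := by
  have hqX : (q : ℝ) ∈ X := by
    rw [hX]; exact mem_iUnion.2 ⟨n, Or.inl ⟨⟨q, rfl⟩, Ioo_subset_Icc_self hq⟩⟩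
  obtain ⟨x, hxX, hFx⟩ := hsurj hqX
  obtain ⟨j, ⟨-, hx⟩ | hx⟩ := mem_iUnion.1 (hX ▸ hxX)
  · exact ⟨j, x, hx, hFx⟩
  · exact (hgap j n (Ioo_subset_Icc_self (hA j hx)) (hFx ▸ hq)).elim

end CellsAndGaps

theorem stmt16_general
    (a b : ℕ → ℝ)
    (hlt : ∀ n, a n < b n)
    (haq : ∀ n, ∃ q : ℚ, (q : ℝ) = a n)
    (hbq : ∀ n, ∃ q : ℚ, (q : ℝ) = b n)
    (hdisj : ∀ i j, i ≠ j → Disjoint (Set.Icc (a i) (b i)) (Set.Icc (a j) (b j)))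
    (hhalf : ∀ n, 2 * (b (n + 1) - a (n + 1)) < b n - a n)
    (hgap : ∀ i j, b i < a j → a j - b i > b 0 - a 0)
    (m : ℕ → ℕ)
    (hm : ∀ n, b n < a (m n))
    (hmgap : ∀ n, Disjoint (Set.Ioo (b n) (a (m n))) (⋃ k, Set.Icc (a k) (b k)))
    (A : ℕ → Set ℝ)
    (hA : ∀ n, A n ⊆ Set.Ioo (b n) (a (m n)))
    (hAcard : ∀ n, ∀ U : Set ℝ, IsOpen U → U.Nonempty → U ⊆ Set.Ioo (b n) (a (m n)) →
      Cardinal.mk ↥(A n ∩ U) = Cardinal.aleph 1)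
    (X : Set ℝ)
    (hX : X = ⋃ n, (({x : ℝ | ∃ q : ℚ, (q : ℝ) = x} ∩ Set.Icc (a n) (b n)) ∪ A n))
    (f : ℝ → ℝ)
    (hbij : Set.BijOn f X X)
    (hne : ∀ x ∈ X, ∀ y ∈ X, |f x - f y| ≤ |x - y|) :
    ∀ n : ℕ, f (a n) = a n ∧ f (b n) = b n := by
  obtain ⟨F, hF, hfF⟩ := (LipschitzOnWith.mk_one (f := f) (s := X) fun x hx y hy => by
    rw [Real.dist_eq, Real.dist_eq]; exact hne x hx y hy).extend_real
  have hbijF : BijOn F X X := hbij.congr hfF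
  have hFgap := mapsTo_Icc_gap_compl_Ioo hm hmgap hA hAcard hX hF.continuous hbijF.injOn
    hbijF.mapsTo
  have hfix (n : ℕ) := hF.fix_or_swap_of_Icc_subset_image (hlt n)
    (SeparatedCells.Icc_subset_image ⟨hlt, hdisj, hhalf, hgap⟩ hF
      (fun j k => hFgap j k (left_mem_Icc.2 (hm j).le))
      (exists_ratCast_mem_image_Icc hA hX hFgap hbijF.surjOn) n)
  have hratX {n : ℕ} {x : ℝ} (hxq : ∃ q : ℚ, (q : ℝ) = x) (hx : x ∈ Icc (a n) (b n)) : x ∈ X :=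
    hX ▸ mem_iUnion.2 ⟨n, Or.inl ⟨hxq, hx⟩⟩
  intro n
  rw [hfF (hratX (haq n) (left_mem_Icc.2 (hlt n).le)),
    hfF (hratX (hbq n) (right_mem_Icc.2 (hlt n).le))]
  refine (hfix n).resolve_right fun ⟨_, hba⟩ => ?_
  have hright : b n < F (a (m n)) := by
    rcases hfix (m n) with ⟨h, -⟩ | ⟨h, -⟩ <;> rw [h] <;> linarith [hm n, hlt (m n)]
  have := hF.continuous.continuousOn.le_of_mapsTo_compl_Ioo (hm n).le (hlt n) (hFgap n n) hba.le
  linarith [hlt n]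

theorem stmt16
    (a b : ℕ → ℝ)
    (hlt : ∀ n, a n < b n)
    (haq : ∀ n, ∃ q : ℚ, (q : ℝ) = a n)
    (hbq : ∀ n, ∃ q : ℚ, (q : ℝ) = b n)
    (hdisj : ∀ i j, i ≠ j → Disjoint (Set.Icc (a i) (b i)) (Set.Icc (a j) (b j)))
    (hhalf : ∀ n, 2 * (b (n + 1) - a (n + 1)) < b n - a n)
    (hgap : ∀ i j, b i < a j → a j - b i > b 0 - a 0)
    (h01 : a 0 < a 1)
    (hcof : ∀ x : ℝ, ∃ k l, b k < x ∧ x < a l)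
    (m : ℕ → ℕ)
    (hm : ∀ n, b n < a (m n))
    (hmgap : ∀ n, Disjoint (Set.Ioo (b n) (a (m n))) (⋃ k, Set.Icc (a k) (b k)))
    (A : ℕ → Set ℝ)
    (hA : ∀ n, A n ⊆ Set.Ioo (b n) (a (m n)))
    (hAcard : ∀ n, ∀ U : Set ℝ, IsOpen U → U.Nonempty → U ⊆ Set.Ioo (b n) (a (m n)) →
      Cardinal.mk ↥(A n ∩ U) = Cardinal.aleph 1)
    (X : Set ℝ)
    (hX : X = ⋃ n, (({x : ℝ | ∃ q : ℚ, (q : ℝ) = x} ∩ Set.Icc (a n) (b n)) ∪ A n))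
    (f : ℝ → ℝ)
    (hbij : Set.BijOn f X X)
    (hne : ∀ x ∈ X, ∀ y ∈ X, |f x - f y| ≤ |x - y|) :
    ∀ n : ℕ, f (a n) = a n ∧ f (b n) = b n :=
  stmt16_general a b hlt haq hbq hdisj hhalf hgap m hm hmgap A hA hAcard X hX f hbij hne
end

section
/- Let X ⊆ ℝ, let f : X → X be a non-expansive map, and let p, q, t ∈ X with p ≤ t ≤ q. If f(p) = q and f(q) = p, then f(t) = p + q − t. -/
theorem stmt18
    (X : Set ℝ) (f : ℝ → ℝ)
    (hmaps : Set.MapsTo f X X)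
    (hne : ∀ x ∈ X, ∀ y ∈ X, |f x - f y| ≤ |x - y|)
    (p q t : ℝ) (hp : p ∈ X) (hq : q ∈ X) (ht : t ∈ X)
    (hpt : p ≤ t) (htq : t ≤ q)
    (hfp : f p = q) (hfq : f q = p) :
    f t = p + q - t := by
  have h1 := hne t ht p hp
  have h2 := hne t ht q hq
  rw [hfp] at h1
  rw [hfq] at h2
  rw [abs_le] at h1 h2
  have := abs_sub_abs_le_abs_sub t p
  cases abs_cases (t - p) with
  | inl h => cases abs_cases (t - q) with
    | inl h' => linarith [h1.1, h1.2, h2.1, h2.2, h.1, h'.1]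
    | inr h' => linarith [h1.1, h1.2, h2.1, h2.2, h.1, h'.1]
  | inr h => cases abs_cases (t - q) with
    | inl h' => linarith [h1.1, h1.2, h2.1, h2.2, h.1, h'.1]
    | inr h' => linarith [h1.1, h1.2, h2.1, h2.2, h.1, h'.1]
end

section
/- There exist sequences a, b : ℕ → ℝ such that: a n < b n and a n, b n are rational for every n; the closed intervals [a n, b n] (n ∈ ℕ) are pairwise disjoint; 2·(b (n+1) − a (n+1)) < b n − a n for every n; for all m, n, if b m < a n then a n − b m > b 0 − a 0; a 0 < a 1; and for every x ∈ ℝ there exist k, l with b k < x < a l. -/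
private def aq (n : ℕ) : ℚ := (-1) ^ (n + 1) * 10 * n
private def bq (n : ℕ) : ℚ := aq n + (1 / 3) ^ n

private lemma aq_even {n : ℕ} (h : Even n) : aq n = -10 * n := by
  have : Odd (n + 1) := Even.add_one h
  simp [aq, this.neg_one_pow]

private lemma aq_odd {n : ℕ} (h : Odd n) : aq n = 10 * n := by
  have : Even (n + 1) := Odd.add_one h
  simp [aq, this.neg_one_pow]

private lemma len_pos (n : ℕ) : (0:ℚ) < (1/3)^n := by positivity
private lemma len_le_one (n : ℕ) : ((1:ℚ)/3)^n ≤ 1 :=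
  pow_le_one₀ (by norm_num) (by norm_num)

private lemma sep {i j : ℕ} (h : i < j) : aq i + 10 ≤ aq j ∨ aq j + 10 ≤ aq i := by
  have hij : (i:ℚ) + 1 ≤ j := by exact_mod_cast h
  have hi0 : (0:ℚ) ≤ (i:ℚ) := Nat.cast_nonneg i
  rcases Nat.even_or_odd i with hi | hi <;> rcases Nat.even_or_odd j with hj | hj
  · right; rw [aq_even hi, aq_even hj]; linarith
  · left; rw [aq_even hi, aq_odd hj]; linarith
  · -- i odd, j even, j ≥ 2, i ≥ 1
    right; rw [aq_odd hi, aq_even hj]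
    have hi1 : (1:ℚ) ≤ i := by exact_mod_cast hi.pos
    linarith
  · left; rw [aq_odd hi, aq_odd hj]; linarith

private lemma sep' {i j : ℕ} (h : i ≠ j) : bq i + 9 ≤ aq j ∨ bq j + 9 ≤ aq i := by
  rcases lt_or_gt_of_ne h with h' | h'
  · rcases sep h' with hs | hs
    · left; have := len_le_one i; unfold bq; linarith
    · right; have := len_le_one j; unfold bq; linarith
  · rcases sep h' with hs | hs
    · right; have := len_le_one j; unfold bq; linarith
    · left; have := len_le_one i; unfold bq; linarith

theorem stmt19 :
    ∃ a b : ℕ → ℝ,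
      (∀ n, a n < b n) ∧
      (∀ n, ∃ q : ℚ, (q : ℝ) = a n) ∧
      (∀ n, ∃ q : ℚ, (q : ℝ) = b n) ∧
      (∀ i j, i ≠ j → Disjoint (Set.Icc (a i) (b i)) (Set.Icc (a j) (b j))) ∧
      (∀ n, 2 * (b (n + 1) - a (n + 1)) < b n - a n) ∧
      (∀ i j, b i < a j → a j - b i > b 0 - a 0) ∧
      a 0 < a 1 ∧
      (∀ x : ℝ, ∃ k l, b k < x ∧ x < a l) := by
  refine ⟨fun n => (aq n : ℝ), fun n => (bq n : ℝ), ?_, fun n => ⟨aq n, rfl⟩,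
    fun n => ⟨bq n, rfl⟩, ?_, ?_, ?_, ?_, ?_⟩ <;> beta_reduce
  · intro n
    have := len_pos n
    have : aq n < bq n := by unfold bq; linarith
    exact_mod_cast this
  · intro i j hij
    rw [Set.disjoint_left]
    rintro x ⟨h1, h2⟩ ⟨h3, h4⟩
    rcases sep' hij with hs | hs
    · have : (bq i : ℝ) + 9 ≤ (aq j : ℝ) := by exact_mod_cast hs
      linarith
    · have : (bq j : ℝ) + 9 ≤ (aq i : ℝ) := by exact_mod_cast hs
      have hb : aq j < bq j := by have := len_pos j; unfold bq; linarith
      have hb' : (aq j : ℝ) < bq j := by exact_mod_cast hb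
      have hbi : aq i < bq i := by have := len_pos i; unfold bq; linarith
      have hbi' : (aq i : ℝ) < bq i := by exact_mod_cast hbi
      linarith
  · intro n
    have h : 2 * (bq (n+1) - aq (n+1)) < bq n - aq n := by
      unfold bq
      have h1 : ((1:ℚ)/3)^(n+1) = (1/3) * (1/3)^n := by ring
      have := len_pos n
      rw [h1]; ring_nf; linarith
    exact_mod_cast h
  · intro i j hij
    have hij' : bq i < aq j := by exact_mod_cast hij
    have hne : i ≠ j := by
      rintro rfl
      have := len_pos i
      unfold bq at hij'; linarith
    have h00 : bq 0 - aq 0 = 1 := by simp [bq]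
    have : aq j - bq i > bq 0 - aq 0 := by
      rw [h00]
      rcases sep' hne with hs | hs
      · linarith
      · exfalso
        have := len_pos j
        have := len_pos i
        unfold bq at hs hij'
        linarith
    exact_mod_cast this
  · have : aq 0 < aq 1 := by
      rw [aq_even (by norm_num), aq_odd (by norm_num)]; norm_num
    exact_mod_cast this
  · intro x
    obtain ⟨m, hm⟩ := exists_nat_gt ((1 - x) / 20)
    obtain ⟨m', hm'⟩ := exists_nat_gt x
    refine ⟨2 * m, 2 * m' + 1, ?_, ?_⟩
    · have h1 : aq (2*m) = -10 * (2*m : ℕ) := aq_even ⟨m, by ring⟩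
      have h2 : (bq (2*m) : ℝ) ≤ -20 * m + 1 := by
        have := len_le_one (2*m)
        have : bq (2*m) ≤ -20 * m + 1 := by
          unfold bq; rw [h1]; push_cast; linarith
        exact_mod_cast this
      have hmx : (m:ℝ) > (1 - x) / 20 := by exact_mod_cast hm
      linarith
    · have h1 : aq (2*m'+1) = 10 * (2*m'+1 : ℕ) := aq_odd ⟨m', by ring⟩
      have h2 : (x:ℝ) < (m' : ℝ) := by exact_mod_cast hm'
      have h3 : (aq (2*m'+1) : ℝ) = 10 * (2*(m':ℝ)+1) := by rw [h1]; push_cast; ring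
      rw [h3]
      have : (0:ℝ) ≤ m' := Nat.cast_nonneg m'
      linarith
end
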